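/- arXiv:2408.15437 — 8 statements merged into one kernel-verified Lean document; each statement's English description precedes it below -/
import Mathlib

section
/- Let d ∈ ℕ and Ξ : ℝ^d → [0,1] be measurable with: supp Ξ ⊆ [−1,1]^d, ∫ Ξ dz = 1, ∑_{k∈ℤ^d} Ξ(z−k) = 1 for all z, and ∫ Ξ² dz > 1/2. Set c := 2∫Ξ² dz − 1 and A_{k,l} := ∫ Ξ(z−k)Ξ(z−l) dz for k,l ∈ ℤ^d. Then for every finitely supported family (λ_k)_{k∈ℤ^d} of reals, ∑_{k,l} λ_k A_{k,l} λ_l ≥ c ∑_k λ_k². -/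
open MeasureTheory

/-!
The Gram matrix `A k l = ∫ Ξ(z - k) Ξ(z - l) dz` is symmetric with nonnegative entries and constant
diagonal `∫ Ξ²`; since the translates of `Ξ` form a partition of unity and each has unit integral,
its row sums are at most `1`. For any such matrix, summing `A k l (λ k + λ l)² ≥ 0` over the pairs
`k ≠ l` gives `λᵀ A λ ≥ ∑ k, (2 A k k - ∑ l, A k l) λ k² ≥ (2 ∫ Ξ² - 1) ∑ k, λ k²`.
-/

theorem sum_le_one_of_tsum_eq_one {ι : Type*} {f : ι → ℝ} (hf : ∀ i, 0 ≤ f i)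
    (h : ∑' i, f i = 1) (s : Finset ι) : ∑ i ∈ s, f i ≤ 1 := by
  have hsum : Summable f := by
    by_contra hns
    simp [tsum_eq_zero_of_not_summable hns] at h
  exact h ▸ hsum.sum_le_tsum s fun i _ => hf i

theorem sum_integral_mul_le_integral {α ι : Type*} [MeasurableSpace α] {μ : Measure α}
    {φ : ι → α → ℝ} (hφ : ∀ l x, 0 ≤ φ l x) (hsum : ∀ x, ∑' l, φ l x = 1)
    (hint : ∀ l, Integrable (φ l) μ) (k : ι) (s : Finset ι) :
    ∑ l ∈ s, ∫ x, φ k x * φ l x ∂μ ≤ ∫ x, φ k x ∂μ := by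
  have hle : ∀ l x, φ l x ≤ 1 := fun l x => by
    simpa using sum_le_one_of_tsum_eq_one (hφ · x) (hsum x) {l}
  have hprod : ∀ l, Integrable (fun x => φ k x * φ l x) μ := fun l =>
    (hint k).mul_bdd (hint l).aestronglyMeasurable
      (ae_of_all _ fun x => by simpa [abs_of_nonneg (hφ l x)] using hle l x)
  rw [← integral_finsetSum s fun l _ => hprod l]
  refine integral_mono (integrable_finsetSum s fun l _ => hprod l) (hint k) fun x => ?_
  simp only [← Finset.mul_sum]
  exact mul_le_of_le_one_right (hφ k x) (sum_le_one_of_tsum_eq_one (hφ · x) (hsum x) s)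

theorem sum_two_mul_diag_sub_rowSum_mul_sq_le_quadraticForm {ι : Type*}
    (s : Finset ι) {A : ι → ι → ℝ} (hA : ∀ k l, 0 ≤ A k l) (hsymm : ∀ k l, A k l = A l k)
    (c : ι → ℝ) :
    ∑ k ∈ s, (2 * A k k - ∑ l ∈ s, A k l) * c k ^ 2 ≤ ∑ k ∈ s, ∑ l ∈ s, c k * A k l * c l := by
  classical
  set B : ι → ι → ℝ := fun k l => A k l * (c k + c l) ^ 2
  have off_diag : 0 ≤ ∑ k ∈ s, ∑ l ∈ s, B k l - ∑ k ∈ s, B k k := by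
    rw [← Finset.sum_sub_distrib, ← Finset.sum_congr rfl fun k hk => Finset.sum_erase_eq_sub hk]
    exact Finset.sum_nonneg fun k _ => Finset.sum_nonneg fun l _ =>
      mul_nonneg (hA k l) (sq_nonneg _)
  have row_col : ∑ k ∈ s, ∑ l ∈ s, A k l * c l ^ 2 = ∑ k ∈ s, ∑ l ∈ s, A k l * c k ^ 2 := by
    rw [Finset.sum_comm]
    simp only [hsymm]
  have expand : ∑ k ∈ s, ∑ l ∈ s, B k l = ∑ k ∈ s, ∑ l ∈ s, A k l * c k ^ 2 +
      ∑ k ∈ s, ∑ l ∈ s, A k l * c l ^ 2 + 2 * ∑ k ∈ s, ∑ l ∈ s, c k * A k l * c l := by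
    simp only [B, Finset.mul_sum, ← Finset.sum_add_distrib]
    exact Finset.sum_congr rfl fun k _ => Finset.sum_congr rfl fun l _ => by ring
  have diag : ∑ k ∈ s, B k k = 4 * ∑ k ∈ s, A k k * c k ^ 2 := by
    rw [Finset.mul_sum]; exact Finset.sum_congr rfl fun k _ => by ring
  have lhs : ∑ k ∈ s, (2 * A k k - ∑ l ∈ s, A k l) * c k ^ 2 =
      2 * ∑ k ∈ s, A k k * c k ^ 2 - ∑ k ∈ s, ∑ l ∈ s, A k l * c k ^ 2 := by
    simp only [sub_mul, Finset.sum_sub_distrib, Finset.sum_mul, Finset.mul_sum, mul_assoc]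
  rw [lhs]
  rw [expand, row_col, diag] at off_diag
  linarith

section Translates

variable {G ι : Type*} [MeasurableSpace G] [AddGroup G] (μ : Measure G) (f : G → ℝ) (v : ι → G)

noncomputable def translateGram (k l : ι) : ℝ := ∫ x, f (x - v k) * f (x - v l) ∂μ

variable {μ f v}

theorem translateGram_comm (k l : ι) : translateGram μ f v k l = translateGram μ f v l k := by
  simp only [translateGram, mul_comm]

theorem translateGram_nonneg (hf : ∀ x, 0 ≤ f x) (k l : ι) : 0 ≤ translateGram μ f v k l :=
  integral_nonneg fun _ => mul_nonneg (hf _) (hf _)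

variable [MeasurableAdd G] [μ.IsAddRightInvariant]

theorem translateGram_self (k : ι) : translateGram μ f v k k = ∫ x, f x ^ 2 ∂μ := by
  simp only [translateGram, ← sq]
  exact integral_sub_right_eq_self (fun x => f x ^ 2) (v k)

theorem sum_translateGram_le_one (hf : ∀ x, 0 ≤ f x) (hint : ∫ x, f x ∂μ = 1)
    (hpart : ∀ x, ∑' l, f (x - v l) = 1) (k : ι) (s : Finset ι) :
    ∑ l ∈ s, translateGram μ f v k l ≤ 1 := by
  have hfint : Integrable f μ := .of_integral_ne_zero (by simp [hint])
  calc ∑ l ∈ s, translateGram μ f v k l ≤ ∫ x, f (x - v k) ∂μ :=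
        sum_integral_mul_le_integral (fun _ _ => hf _) hpart (fun l => hfint.comp_sub_right _) k s
    _ = 1 := (integral_sub_right_eq_self f (v k)).trans hint

end Translates

theorem gram_matrix_lower_bound_general (d : ℕ) (Ξ : (Fin d → ℝ) → ℝ)
    (h01 : ∀ z, Ξ z ∈ Set.Icc (0 : ℝ) 1)
    (hint : ∫ z : Fin d → ℝ, Ξ z = 1)
    (hpart : ∀ z : Fin d → ℝ, ∑' k : Fin d → ℤ, Ξ (fun i => z i - (k i : ℝ)) = 1)
    (lam : (Fin d → ℤ) → ℝ) (hfin : (Function.support lam).Finite) :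
    (2 * (∫ z : Fin d → ℝ, (Ξ z) ^ 2) - 1) * ∑' k : Fin d → ℤ, (lam k) ^ 2 ≤
      ∑' k : Fin d → ℤ, ∑' l : Fin d → ℤ,
        lam k * (∫ z : Fin d → ℝ,
          Ξ (fun i => z i - (k i : ℝ)) * Ξ (fun i => z i - (l i : ℝ))) * lam l := by
  let v : (Fin d → ℤ) → Fin d → ℝ := fun k i => k i
  let s := hfin.toFinset
  have hΞ : ∀ z, 0 ≤ Ξ z := fun z => (h01 z).1
  have hlam : ∀ k ∉ s, lam k = 0 := fun k hk => by simpa [s] using hk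
  change _ ≤ ∑' k, ∑' l, lam k * translateGram volume Ξ v k l * lam l
  rw [tsum_eq_sum (s := s) fun k hk => by simp [hlam k hk],
    tsum_eq_sum (s := s) fun k hk => by simp [hlam k hk],
    Finset.sum_congr rfl fun k _ => tsum_eq_sum (s := s) fun l hl => by simp [hlam l hl]]
  calc (2 * (∫ z, Ξ z ^ 2) - 1) * ∑ k ∈ s, lam k ^ 2
      = ∑ k ∈ s, (2 * translateGram volume Ξ v k k - 1) * lam k ^ 2 := by
        simp only [translateGram_self, Finset.mul_sum]
    _ ≤ ∑ k ∈ s, (2 * translateGram volume Ξ v k k - ∑ l ∈ s, translateGram volume Ξ v k l)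
          * lam k ^ 2 := by
        gcongr with k
        exact sum_translateGram_le_one hΞ hint hpart k s
    _ ≤ _ := sum_two_mul_diag_sub_rowSum_mul_sq_le_quadraticForm s (translateGram_nonneg hΞ)
          translateGram_comm lam

/-- Lemma 2.4 (ellipticity of the Gram matrix): if `Ξ : ℝ^d → [0,1]` is measurable,
supported in `[−1,1]^d`, has unit integral, its integer shifts form a partition of unity,
and `∫ Ξ² > 1/2`, then the Gram matrix `A_{k,l} = ∫ Ξ(z−k)Ξ(z−l) dz` satisfies
`∑_{k,l} λ_k A_{k,l} λ_l ≥ (2∫Ξ² − 1) ∑_k λ_k²` for all finitely supported `λ`. -/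
theorem gram_matrix_lower_bound (d : ℕ) (Ξ : (Fin d → ℝ) → ℝ)
    (hmeas : Measurable Ξ) (h01 : ∀ z, Ξ z ∈ Set.Icc (0 : ℝ) 1)
    (hsupp : Function.support Ξ ⊆ Set.Icc (fun _ => (-1 : ℝ)) (fun _ => (1 : ℝ)))
    (hint : ∫ z : Fin d → ℝ, Ξ z = 1)
    (hpart : ∀ z : Fin d → ℝ, ∑' k : Fin d → ℤ, Ξ (fun i => z i - (k i : ℝ)) = 1)
    (hsq : 1 / 2 < ∫ z : Fin d → ℝ, (Ξ z) ^ 2)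
    (lam : (Fin d → ℤ) → ℝ) (hfin : (Function.support lam).Finite) :
    (2 * (∫ z : Fin d → ℝ, (Ξ z) ^ 2) - 1) * ∑' k : Fin d → ℤ, (lam k) ^ 2 ≤
      ∑' k : Fin d → ℤ, ∑' l : Fin d → ℤ,
        lam k * (∫ z : Fin d → ℝ,
          Ξ (fun i => z i - (k i : ℝ)) * Ξ (fun i => z i - (l i : ℝ))) * lam l :=
  gram_matrix_lower_bound_general d Ξ h01 hint hpart lam hfin
end

section
/- Let Ξ : ℝ^d → [0,1] satisfy: supp Ξ ⊆ [−1,1]^d, ∫Ξ dz = 1, ∑_{k∈ℤ^d} Ξ(z−k) = 1 for all z, and ∫Ξ² dz > 1/2. Let G ⊆ ℤ^d be finite and N ∈ ℕ. Then for every y ∈ ℝ^G, with c := 2∫Ξ²dz − 1, one has (c/N^d) ∑_{p∈G} y_p² ≤ ‖∑_{p∈G} y_p Ξ(N·−p)‖²_{L²(ℝ^d)} ≤ (3^d/N^d) ∑_{p∈G} y_p². -/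
/-!
Let `A k = ∫ Ξ(z) Ξ(z - k) dz` for `k ∈ ℤ^d`. The substitution `w = N z` turns the squared norm
into `N^{-d} ∑_{p,q ∈ G} y_p y_q A(q - p)`, a quadratic form whose Toeplitz matrix has nonnegative
entries, and the partition of unity gives `∑_k A k = ∫ Ξ(z) ∑_k Ξ(z - k) dz = ∫ Ξ = 1`.
So every row and column sum of the matrix is at most `1`, and Schur's test (`2|ab| ≤ a² + b²`)
bounds the form by `∑ y_p²`. With the diagonal `A 0 = ∫ Ξ²` removed the sums are at most
`1 - A 0`, which gives the lower bound `(A 0 - (1 - A 0)) ∑ y_p²`.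
-/

open MeasureTheory Finset

section SchurTest

variable {Γ : Type*} [AddCommGroup Γ] {A : Γ → ℝ} {M : ℝ}

theorem sum_comp_sub_right_le_of_hasSum (hA0 : ∀ k, 0 ≤ A k) (hA : HasSum A M)
    (G : Finset Γ) (p : Γ) : ∑ q ∈ G, A (q - p) ≤ M :=
  sum_le_hasSum G (fun _ _ => hA0 _) ((Equiv.subRight p).hasSum_iff.mpr hA)

theorem sum_comp_sub_left_le_of_hasSum (hA0 : ∀ k, 0 ≤ A k) (hA : HasSum A M)
    (G : Finset Γ) (q : Γ) : ∑ p ∈ G, A (q - p) ≤ M :=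
  sum_le_hasSum G (fun _ _ => hA0 _) ((Equiv.subLeft q).hasSum_iff.mpr hA)

theorem abs_sum_sum_mul_sub_le (hA0 : ∀ k, 0 ≤ A k) (hA : HasSum A M)
    (G : Finset Γ) (y : Γ → ℝ) :
    |∑ p ∈ G, ∑ q ∈ G, y p * y q * A (q - p)| ≤ M * ∑ p ∈ G, y p ^ 2 := by
  have hamgm : ∀ a b : ℝ, |a * b| ≤ a ^ 2 / 2 + b ^ 2 / 2 := fun a b => by
    rw [abs_mul, ← sq_abs a, ← sq_abs b]
    nlinarith [sq_nonneg (|a| - |b|)]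
  calc |∑ p ∈ G, ∑ q ∈ G, y p * y q * A (q - p)|
      ≤ ∑ p ∈ G, ∑ q ∈ G, |y p * y q| * A (q - p) := by
        refine (abs_sum_le_sum_abs _ _).trans (sum_le_sum fun p _ => ?_)
        refine (abs_sum_le_sum_abs _ _).trans (le_of_eq (sum_congr rfl fun q _ => ?_))
        rw [abs_mul _ (A _), abs_of_nonneg (hA0 _)]
    _ ≤ ∑ p ∈ G, ∑ q ∈ G, (y p ^ 2 / 2 * A (q - p) + y q ^ 2 / 2 * A (q - p)) := by
        gcongr with p _ q _
        rw [← add_mul]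
        exact mul_le_mul_of_nonneg_right (hamgm _ _) (hA0 _)
    _ = ∑ p ∈ G, y p ^ 2 / 2 * ∑ q ∈ G, A (q - p)
          + ∑ q ∈ G, y q ^ 2 / 2 * ∑ p ∈ G, A (q - p) := by
        simp only [sum_add_distrib, mul_sum]
        rw [sum_comm (f := fun p q => y q ^ 2 / 2 * A (q - p))]
    _ ≤ ∑ p ∈ G, y p ^ 2 / 2 * M + ∑ q ∈ G, y q ^ 2 / 2 * M := by
        gcongr with p _ q _
        · exact sum_comp_sub_right_le_of_hasSum hA0 hA G p
        · exact sum_comp_sub_left_le_of_hasSum hA0 hA G q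
    _ = M * ∑ p ∈ G, y p ^ 2 := by
        rw [← sum_add_distrib, mul_sum]
        exact sum_congr rfl fun p _ => by ring

theorem le_sum_sum_mul_sub (hA0 : ∀ k, 0 ≤ A k) (hA : HasSum A M) (G : Finset Γ) (y : Γ → ℝ) :
    (2 * A 0 - M) * ∑ p ∈ G, y p ^ 2 ≤ ∑ p ∈ G, ∑ q ∈ G, y p * y q * A (q - p) := by
  classical
  set A' := Function.update A 0 0 with hA'
  have hA'0 : ∀ k, 0 ≤ A' k := fun k => by
    rw [hA', Function.update_apply]
    split_ifs
    exacts [le_rfl, hA0 k]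
  have hA'sum : HasSum A' (M - A 0) := by
    simpa [neg_add_eq_sub] using hA.update 0 0
  have hdiag : ∀ p q, y p * y q * A (q - p) =
      y p * y q * A' (q - p) + if q = p then A 0 * y p ^ 2 else 0 := fun p q => by
    by_cases hqp : q = p
    · subst hqp
      simp only [sub_self, hA', Function.update_self, mul_zero, ↓reduceIte, zero_add]
      ring
    · simp [hA', Function.update_of_ne (sub_ne_zero.mpr hqp), hqp]
  have hsplit : ∑ p ∈ G, ∑ q ∈ G, y p * y q * A (q - p) =
      A 0 * ∑ p ∈ G, y p ^ 2 + ∑ p ∈ G, ∑ q ∈ G, y p * y q * A' (q - p) := by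
    simp only [hdiag, sum_add_distrib, sum_ite_eq', mul_sum]
    rw [add_comm]
    exact congrArg₂ _ (sum_congr rfl fun p hp => by simp [hp]) rfl
  have hoff := neg_abs_le _ |>.trans' (neg_le_neg (abs_sum_sum_mul_sub_le hA'0 hA'sum G y))
  linarith

end SchurTest

theorem integral_sq_sum_mul_eq {α ι : Type*} [MeasurableSpace α] {μ : Measure α}
    (s : Finset ι) (y : ι → ℝ) (f : ι → α → ℝ)
    (hf : ∀ p q, Integrable (fun x => f p x * f q x) μ) :
    ∫ x, (∑ p ∈ s, y p * f p x) ^ 2 ∂μ =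
      ∑ p ∈ s, ∑ q ∈ s, y p * y q * ∫ x, f p x * f q x ∂μ := by
  have hexpand : ∀ x, (∑ p ∈ s, y p * f p x) ^ 2 =
      ∑ p ∈ s, ∑ q ∈ s, y p * y q * (f p x * f q x) := fun x => by
    rw [sq, sum_mul_sum]
    exact sum_congr rfl fun p _ => sum_congr rfl fun q _ => by ring
  simp_rw [hexpand]
  rw [integral_finsetSum _ fun p _ => integrable_finsetSum _ fun q _ => (hf p q).const_mul _]
  refine sum_congr rfl fun p _ => ?_
  rw [integral_finsetSum _ fun q _ => (hf p q).const_mul _]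
  simp_rw [integral_const_mul]

section Autocorrelation

variable {E : Type*} [AddGroup E] [MeasurableSpace E] {μ : Measure E} {Ξ : E → ℝ}

noncomputable def autocorrelation (μ : Measure E) (Ξ : E → ℝ) (a : E) : ℝ :=
  ∫ z, Ξ z * Ξ (z - a) ∂μ

theorem autocorrelation_nonneg (hΞ0 : ∀ z, 0 ≤ Ξ z) (a : E) : 0 ≤ autocorrelation μ Ξ a :=
  integral_nonneg fun z => mul_nonneg (hΞ0 z) (hΞ0 _)

variable [MeasurableAdd E] [μ.IsAddRightInvariant]

theorem integrable_mul_comp_sub {C : ℝ} (hΞ : Integrable Ξ μ) (hC : ∀ z, ‖Ξ z‖ ≤ C) (a : E) :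
    Integrable (fun z => Ξ z * Ξ (z - a)) μ :=
  hΞ.mul_bdd (hΞ.comp_sub_right a).aestronglyMeasurable (ae_of_all _ fun _ => hC _)

theorem sum_autocorrelation_le_integral {κ : Type*} {C : ℝ} (hΞ : Integrable Ξ μ)
    (hC : ∀ z, ‖Ξ z‖ ≤ C) (hΞ0 : ∀ z, 0 ≤ Ξ z) (v : κ → E)
    (hpart : ∀ z, ∑' k, Ξ (z - v k) = 1) (s : Finset κ) :
    ∑ k ∈ s, autocorrelation μ Ξ (v k) ≤ ∫ z, Ξ z ∂μ := by
  have hpartial : ∀ z, ∑ k ∈ s, Ξ (z - v k) ≤ 1 := fun z => by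
    have hsummable : Summable fun k => Ξ (z - v k) := by
      by_contra h
      simpa [tsum_eq_zero_of_not_summable h] using hpart z
    exact hpart z ▸ hsummable.sum_le_tsum s fun k _ => hΞ0 _
  have hint : Integrable (fun z => Ξ z * ∑ k ∈ s, Ξ (z - v k)) μ := by
    simpa only [mul_sum] using integrable_finsetSum s fun k _ => integrable_mul_comp_sub hΞ hC (v k)
  calc ∑ k ∈ s, autocorrelation μ Ξ (v k)
      = ∫ z, Ξ z * ∑ k ∈ s, Ξ (z - v k) ∂μ := by
        simp_rw [mul_sum]
        exact (integral_finsetSum s fun k _ => integrable_mul_comp_sub hΞ hC (v k)).symm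
    _ ≤ ∫ z, Ξ z ∂μ :=
        integral_mono hint hΞ fun z => mul_le_of_le_one_right (hΞ0 z) (hpartial z)

theorem summable_autocorrelation {κ : Type*} {C : ℝ} (hΞ : Integrable Ξ μ)
    (hC : ∀ z, ‖Ξ z‖ ≤ C) (hΞ0 : ∀ z, 0 ≤ Ξ z) (v : κ → E)
    (hpart : ∀ z, ∑' k, Ξ (z - v k) = 1) :
    Summable fun k => autocorrelation μ Ξ (v k) :=
  summable_of_sum_le (fun _ => autocorrelation_nonneg hΞ0 _)
    (sum_autocorrelation_le_integral hΞ hC hΞ0 v hpart)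

theorem tsum_autocorrelation_le_integral {κ : Type*} {C : ℝ} (hΞ : Integrable Ξ μ)
    (hC : ∀ z, ‖Ξ z‖ ≤ C) (hΞ0 : ∀ z, 0 ≤ Ξ z) (v : κ → E)
    (hpart : ∀ z, ∑' k, Ξ (z - v k) = 1) :
    ∑' k, autocorrelation μ Ξ (v k) ≤ ∫ z, Ξ z ∂μ :=
  Real.tsum_le_of_sum_le (fun _ => autocorrelation_nonneg hΞ0 _)
    (sum_autocorrelation_le_integral hΞ hC hΞ0 v hpart)

end Autocorrelation

section Rescaling

variable {E : Type*} [NormedAddCommGroup E] [NormedSpace ℝ E] [MeasurableSpace E] [BorelSpace E]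
  [FiniteDimensional ℝ E] {μ : Measure E} [μ.IsAddHaarMeasure] {Ξ : E → ℝ}

theorem integral_comp_smul_sub_mul (R : ℝ) (a b : E) :
    ∫ z, Ξ (R • z - a) * Ξ (R • z - b) ∂μ =
      |(R ^ Module.finrank ℝ E)⁻¹| * autocorrelation μ Ξ (b - a) := by
  rw [Measure.integral_comp_smul μ (fun w => Ξ (w - a) * Ξ (w - b)) R, smul_eq_mul,
    autocorrelation, ← integral_add_right_eq_self (μ := μ) _ a]
  simp_rw [add_sub_cancel_right, sub_sub_eq_add_sub]

theorem integrable_comp_smul_sub_mul {C : ℝ} (hΞ : Integrable Ξ μ) (hC : ∀ z, ‖Ξ z‖ ≤ C)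
    {R : ℝ} (hR : R ≠ 0) (a b : E) :
    Integrable (fun z => Ξ (R • z - a) * Ξ (R • z - b)) μ := by
  refine (integrable_comp_smul_iff μ (fun w => Ξ (w - a) * Ξ (w - b)) hR).mpr ?_
  simpa [sub_sub_sub_cancel_right] using
    (integrable_mul_comp_sub hΞ hC (b - a)).comp_sub_right (μ := μ) a

theorem integral_sq_sum_comp_smul_sub_intCast {ι : Type*} [Fintype ι] {Ξ : (ι → ℝ) → ℝ} {C : ℝ}
    (hΞ : Integrable Ξ) (hC : ∀ z, ‖Ξ z‖ ≤ C) (G : Finset (ι → ℤ)) {R : ℝ} (hR : R ≠ 0)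
    (y : (ι → ℤ) → ℝ) :
    ∫ z, (∑ p ∈ G, y p * Ξ (R • z - Int.cast ∘ p)) ^ 2 =
      |(R ^ Fintype.card ι)⁻¹| *
        ∑ p ∈ G, ∑ q ∈ G, y p * y q * autocorrelation volume Ξ (Int.cast ∘ (q - p)) := by
  rw [integral_sq_sum_mul_eq G y (fun p z => Ξ (R • z - Int.cast ∘ p))
    fun p q => integrable_comp_smul_sub_mul hΞ hC hR _ _, mul_sum]
  refine sum_congr rfl fun p _ => ((mul_sum _ _ _).trans (sum_congr rfl fun q _ => ?_)).symm
  rw [integral_comp_smul_sub_mul, Module.finrank_fintype_fun_eq_card,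
    show (Int.cast ∘ q - Int.cast ∘ p : ι → ℝ) = Int.cast ∘ (q - p) by ext; simp]
  ring

end Rescaling

theorem height_map_norm_bounds_general (d : ℕ) (Ξ : (Fin d → ℝ) → ℝ)
    (h01 : ∀ z, Ξ z ∈ Set.Icc (0 : ℝ) 1)
    (hint : ∫ z : Fin d → ℝ, Ξ z = 1)
    (hpart : ∀ z : Fin d → ℝ, ∑' k : Fin d → ℤ, Ξ (fun i => z i - (k i : ℝ)) = 1)
    (G : Finset (Fin d → ℤ)) (N : ℕ) (hN : 0 < N) (y : (Fin d → ℤ) → ℝ) :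
    ((2 * (∫ z : Fin d → ℝ, (Ξ z) ^ 2) - 1) / (N : ℝ) ^ d) * ∑ p ∈ G, (y p) ^ 2 ≤
        (∫ z : Fin d → ℝ, (∑ p ∈ G, y p * Ξ (fun i => (N : ℝ) * z i - (p i : ℝ))) ^ 2) ∧
      (∫ z : Fin d → ℝ, (∑ p ∈ G, y p * Ξ (fun i => (N : ℝ) * z i - (p i : ℝ))) ^ 2) ≤
        ((3 : ℝ) ^ d / (N : ℝ) ^ d) * ∑ p ∈ G, (y p) ^ 2 := by
  have hΞ : Integrable Ξ := .of_integral_ne_zero (by simp [hint])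
  have hΞ0 : ∀ z, 0 ≤ Ξ z := fun z => (h01 z).1
  have hΞ1 : ∀ z, ‖Ξ z‖ ≤ 1 := fun z => (Real.norm_of_nonneg (hΞ0 z)).trans_le (h01 z).2
  set A : (Fin d → ℤ) → ℝ := fun k => autocorrelation volume Ξ (Int.cast ∘ k)
  have hA0 : ∀ k, 0 ≤ A k := fun k => autocorrelation_nonneg hΞ0 _
  have hAsum : HasSum A (∑' k, A k) :=
    (summable_autocorrelation hΞ hΞ1 hΞ0 (fun k => Int.cast ∘ k) hpart).hasSum
  have hAtsum : ∑' k, A k ≤ 1 :=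
    hint ▸ tsum_autocorrelation_le_integral hΞ hΞ1 hΞ0 (fun k => Int.cast ∘ k) hpart
  have hAzero : A 0 = ∫ z : Fin d → ℝ, (Ξ z) ^ 2 := by simp [A, autocorrelation, sq]
  have hR : 0 ≤ ∑ p ∈ G, y p ^ 2 := sum_nonneg fun p _ => sq_nonneg _
  have hlower := le_sum_sum_mul_sub hA0 hAsum G y
  have hupper := (le_abs_self _).trans (abs_sum_sum_mul_sub_le hA0 hAsum G y)
  have h3d : (1 : ℝ) ≤ 3 ^ d := one_le_pow₀ (by norm_num)
  change _ ≤ ∫ z, (∑ p ∈ G, y p * Ξ ((N : ℝ) • z - Int.cast ∘ p)) ^ 2 ∧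
    ∫ z, (∑ p ∈ G, y p * Ξ ((N : ℝ) • z - Int.cast ∘ p)) ^ 2 ≤ _
  rw [integral_sq_sum_comp_smul_sub_intCast hΞ hΞ1 G (by positivity) y, Fintype.card_fin,
    abs_of_nonneg (by positivity), ← hAzero, div_eq_inv_mul, div_eq_inv_mul, mul_assoc, mul_assoc]
  constructor <;> gcongr
  · nlinarith [mul_le_mul_of_nonneg_right hAtsum hR]
  · nlinarith [mul_le_mul_of_nonneg_right (hAtsum.trans h3d) hR]

/-- Proposition 2.5: norm equivalence for the height map. For `Ξ` satisfying the
partition-of-unity condition and any finite set `G ⊆ ℤ^d` of grid points,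
`(c/N^d) ∑ y_p² ≤ ‖∑_p y_p Ξ(N·−p)‖²_{L²} ≤ (3^d/N^d) ∑ y_p²` with `c = 2∫Ξ² − 1`. -/
theorem height_map_norm_bounds (d : ℕ) (Ξ : (Fin d → ℝ) → ℝ)
    (hmeas : Measurable Ξ) (h01 : ∀ z, Ξ z ∈ Set.Icc (0 : ℝ) 1)
    (hsupp : Function.support Ξ ⊆ Set.Icc (fun _ => (-1 : ℝ)) (fun _ => (1 : ℝ)))
    (hint : ∫ z : Fin d → ℝ, Ξ z = 1)
    (hpart : ∀ z : Fin d → ℝ, ∑' k : Fin d → ℤ, Ξ (fun i => z i - (k i : ℝ)) = 1)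
    (hsq : 1 / 2 < ∫ z : Fin d → ℝ, (Ξ z) ^ 2)
    (G : Finset (Fin d → ℤ)) (N : ℕ) (hN : 0 < N) (y : (Fin d → ℤ) → ℝ) :
    ((2 * (∫ z : Fin d → ℝ, (Ξ z) ^ 2) - 1) / (N : ℝ) ^ d) * ∑ p ∈ G, (y p) ^ 2 ≤
        (∫ z : Fin d → ℝ, (∑ p ∈ G, y p * Ξ (fun i => (N : ℝ) * z i - (p i : ℝ))) ^ 2) ∧
      (∫ z : Fin d → ℝ, (∑ p ∈ G, y p * Ξ (fun i => (N : ℝ) * z i - (p i : ℝ))) ^ 2) ≤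
        ((3 : ℝ) ^ d / (N : ℝ) ^ d) * ∑ p ∈ G, (y p) ^ 2 :=
  height_map_norm_bounds_general d Ξ h01 hint hpart G N hN y
end

section
/- Let D ⊂ ℝ^d be bounded open, (D_N) increasing sets with G_N = N D_N ∩ ℤ^d, ⋃_N D_N = D up to Lebesgue-null sets, and let Ξ satisfy the partition-of-unity condition (supp Ξ ⊆ [−1,1]^d, ∫Ξ=1, ∑_{k∈ℤ^d}Ξ(·−k)=1, ∫Ξ²>1/2). Then for every φ ∈ C(cl D), lim_{N→∞} ∫_D |∑_{p∈G_N} φ(p/N) Ξ(Nz−p) − φ(z)|² dz = 0. -/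
/-!
Since `Ξ` is supported in `[-1,1]^d`, only lattice points `p` with `|p/N - z|_∞ ≤ 1/N` contribute
to the sum at `z`. If `z ∈ D` lies in some `D_{N₀}`, which is relatively open in `cl D`, then for
large `N` all these points lie in `G_N`, so the weights `Ξ(Nz - p)`, `p ∈ G_N`, sum to `1` and the
sum is a convex combination of values of `φ` within `1/N` of `z`; it tends to `φ z`. The sums are
bounded by `sup |φ|` on `cl D`, so dominated convergence on the bounded set `D` finishes the proof.
-/

open MeasureTheory Filter Topology

noncomputable def heightMap {ι : Type*} (Ξ φ : (ι → ℝ) → ℝ) (s : Finset (ι → ℤ)) (N : ℕ)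
    (z : ι → ℝ) : ℝ :=
  ∑ p ∈ s, φ (fun i => (p i : ℝ) / N) * Ξ (fun i => N * z i - p i)

theorem measurable_heightMap {ι : Type*} {Ξ : (ι → ℝ) → ℝ} (hΞ : Measurable Ξ)
    {φ : (ι → ℝ) → ℝ} {s : Finset (ι → ℤ)} {N : ℕ} : Measurable (heightMap Ξ φ s N) := by
  unfold heightMap
  fun_prop

theorem abs_sum_mul_le_of_sum_le_one {α : Type*} {s : Finset α} {a w : α → ℝ} {M : ℝ}
    (hw : ∀ p ∈ s, 0 ≤ w p) (hsum : ∑ p ∈ s, w p ≤ 1) (hM : 0 ≤ M)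
    (ha : ∀ p ∈ s, w p ≠ 0 → |a p| ≤ M) : |∑ p ∈ s, a p * w p| ≤ M :=
  calc |∑ p ∈ s, a p * w p| ≤ ∑ p ∈ s, |a p * w p| := Finset.abs_sum_le_sum_abs _ _
    _ ≤ ∑ p ∈ s, M * w p := by
        refine Finset.sum_le_sum fun p hp => ?_
        rw [abs_mul, abs_of_nonneg (hw p hp)]
        rcases eq_or_ne (w p) 0 with h0 | h0
        · simp [h0]
        · exact mul_le_mul_of_nonneg_right (ha p hp h0) (hw p hp)
    _ = M * ∑ p ∈ s, w p := (Finset.mul_sum _ _ _).symm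
    _ ≤ M := mul_le_of_le_one_right hM hsum

theorem tendsto_integral_sq_sub_of_tendsto_ae {α : Type*} [MeasurableSpace α] {μ : Measure α}
    [IsFiniteMeasure μ] {f : ℕ → α → ℝ} {g : α → ℝ} {M : ℝ}
    (hf : ∀ n, AEStronglyMeasurable (f n) μ) (hg : AEStronglyMeasurable g μ)
    (hfM : ∀ n, ∀ᵐ x ∂μ, |f n x| ≤ M) (hgM : ∀ᵐ x ∂μ, |g x| ≤ M)
    (hlim : ∀ᵐ x ∂μ, Tendsto (fun n => f n x) atTop (𝓝 (g x))) :
    Tendsto (fun n => ∫ x, (f n x - g x) ^ 2 ∂μ) atTop (𝓝 0) := by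
  have hbound : ∀ n, ∀ᵐ x ∂μ, ‖(f n x - g x) ^ 2‖ ≤ (2 * M) ^ 2 := fun n => by
    filter_upwards [hfM n, hgM] with x hfx hgx
    rw [Real.norm_eq_abs, abs_pow]
    exact pow_le_pow_left₀ (abs_nonneg _) (by linarith [abs_sub (f n x) (g x)]) 2
  have hlim' : ∀ᵐ x ∂μ, Tendsto (fun n => (f n x - g x) ^ 2) atTop (𝓝 0) := by
    filter_upwards [hlim] with x hx
    simpa using ((hx.sub_const (g x)).pow 2)
  simpa using tendsto_integral_of_dominated_convergence (fun _ => (2 * M) ^ 2)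
    (fun n => ((hf n).sub hg).pow 2) (integrable_const _) hbound hlim'

section PartitionOfUnity

variable {ι : Type*} {Ξ : (ι → ℝ) → ℝ}

theorem abs_sub_intCast_le_one_of_ne_zero
    (hsupp : Function.support Ξ ⊆ Set.Icc (fun _ => (-1 : ℝ)) (fun _ => (1 : ℝ)))
    {w : ι → ℝ} {k : ι → ℤ} (hk : Ξ (fun i => w i - k i) ≠ 0) (i : ι) : |w i - k i| ≤ 1 := by
  obtain ⟨h1, h2⟩ := hsupp hk
  exact abs_le.2 ⟨h1 i, h2 i⟩

theorem finite_setOf_comp_sub_intCast_ne_zero [Finite ι]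
    (hsupp : Function.support Ξ ⊆ Set.Icc (fun _ => (-1 : ℝ)) (fun _ => (1 : ℝ))) (w : ι → ℝ) :
    {k : ι → ℤ | Ξ (fun i => w i - k i) ≠ 0}.Finite := by
  refine (Set.Finite.pi fun i => Set.finite_Icc ⌈w i - 1⌉ ⌊w i + 1⌋).subset fun k hk => ?_
  simp only [Set.mem_pi, Set.mem_univ, Set.mem_Icc, Int.ceil_le, Int.le_floor, true_implies]
  intro i
  have := abs_le.1 (abs_sub_intCast_le_one_of_ne_zero hsupp hk i)
  constructor <;> linarith

theorem dist_div_le_of_comp_sub_ne_zero [Fintype ι]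
    (hsupp : Function.support Ξ ⊆ Set.Icc (fun _ => (-1 : ℝ)) (fun _ => (1 : ℝ)))
    {N : ℕ} (hN : 0 < N) {z : ι → ℝ} {k : ι → ℤ}
    (hk : Ξ (fun i => N * z i - k i) ≠ 0) : dist (fun i => (k i : ℝ) / N) z ≤ 1 / N := by
  have hN' : (0 : ℝ) < N := Nat.cast_pos.2 hN
  refine (dist_pi_le_iff (by positivity)).2 fun i => ?_
  rw [Real.dist_eq, div_sub' hN'.ne', abs_div, abs_of_pos hN', abs_sub_comm]
  exact div_le_div_of_nonneg_right (abs_sub_intCast_le_one_of_ne_zero hsupp hk i) hN'.le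

theorem sum_comp_sub_intCast_le_one [Finite ι] (hΞ0 : ∀ z, 0 ≤ Ξ z)
    (hsupp : Function.support Ξ ⊆ Set.Icc (fun _ => (-1 : ℝ)) (fun _ => (1 : ℝ)))
    (hpart : ∀ z : ι → ℝ, ∑' k : ι → ℤ, Ξ (fun i => z i - (k i : ℝ)) = 1)
    (w : ι → ℝ) (s : Finset (ι → ℤ)) : ∑ k ∈ s, Ξ (fun i => w i - k i) ≤ 1 := by
  have hfin := finite_setOf_comp_sub_intCast_ne_zero hsupp w
  rw [← hpart w]
  refine Summable.sum_le_tsum s (fun _ _ => hΞ0 _)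
    (summable_of_ne_finset_zero (s := hfin.toFinset) fun k hk => ?_)
  simpa using fun h => hk (hfin.mem_toFinset.2 h)

theorem sum_comp_sub_intCast_eq_one
    (hpart : ∀ z : ι → ℝ, ∑' k : ι → ℤ, Ξ (fun i => z i - (k i : ℝ)) = 1)
    {w : ι → ℝ} {s : Finset (ι → ℤ)} (hs : ∀ k : ι → ℤ, Ξ (fun i => w i - k i) ≠ 0 → k ∈ s) :
    ∑ k ∈ s, Ξ (fun i => w i - k i) = 1 := by
  rw [← hpart w, tsum_eq_sum fun k hk => not_not.1 (mt (hs k) hk)]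

theorem abs_heightMap_le [Finite ι] (hΞ0 : ∀ z, 0 ≤ Ξ z)
    (hsupp : Function.support Ξ ⊆ Set.Icc (fun _ => (-1 : ℝ)) (fun _ => (1 : ℝ)))
    (hpart : ∀ z : ι → ℝ, ∑' k : ι → ℤ, Ξ (fun i => z i - (k i : ℝ)) = 1)
    {φ : (ι → ℝ) → ℝ} {s : Finset (ι → ℤ)} {N : ℕ} {M : ℝ} (hM : 0 ≤ M)
    (hφ : ∀ p ∈ s, |φ (fun i => (p i : ℝ) / N)| ≤ M) (z : ι → ℝ) :
    |heightMap Ξ φ s N z| ≤ M :=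
  abs_sum_mul_le_of_sum_le_one (fun _ _ => hΞ0 _)
    (sum_comp_sub_intCast_le_one hΞ0 hsupp hpart _ s) hM fun p hp _ => hφ p hp

theorem tendsto_heightMap [Fintype ι] (hΞ0 : ∀ z, 0 ≤ Ξ z)
    (hsupp : Function.support Ξ ⊆ Set.Icc (fun _ => (-1 : ℝ)) (fun _ => (1 : ℝ)))
    (hpart : ∀ z : ι → ℝ, ∑' k : ι → ℤ, Ξ (fun i => z i - (k i : ℝ)) = 1)
    {φ : (ι → ℝ) → ℝ} {K : Set (ι → ℝ)} {z : ι → ℝ} (hφ : ContinuousWithinAt φ K z)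
    {s : ℕ → Finset (ι → ℤ)} (hsK : ∀ N, ∀ p ∈ s N, (fun i => (p i : ℝ) / N) ∈ K)
    {U : Set (ι → ℝ)} (hU : U ∈ 𝓝 z)
    (hsU : ∀ᶠ N : ℕ in atTop, ∀ k : ι → ℤ, (fun i => (k i : ℝ) / N) ∈ U → k ∈ s N) :
    Tendsto (fun N => heightMap Ξ φ (s N) N z) atTop (𝓝 (φ z)) := by
  refine Metric.tendsto_nhds.2 fun ε hε => ?_
  obtain ⟨δ, hδ, hφδ⟩ := Metric.continuousWithinAt_iff.1 hφ (ε / 2) (half_pos hε)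
  obtain ⟨r, hr, hrU⟩ := Metric.mem_nhds_iff.1 hU
  have hsmall : ∀ᶠ N : ℕ in atTop, 1 / (N : ℝ) < min δ r :=
    tendsto_one_div_atTop_nhds_zero_nat.eventually (gt_mem_nhds (lt_min hδ hr))
  filter_upwards [hsmall, hsU, eventually_gt_atTop 0] with N hNδr hNU hN
  have hnear : ∀ k : ι → ℤ, Ξ (fun i => N * z i - k i) ≠ 0 →
      dist (fun i => (k i : ℝ) / N) z < min δ r := fun k hk =>
    (dist_div_le_of_comp_sub_ne_zero hsupp hN hk).trans_lt hNδr
  have hsum : ∑ p ∈ s N, Ξ (fun i => N * z i - p i) = 1 :=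
    sum_comp_sub_intCast_eq_one hpart fun k hk =>
      hNU k (hrU (Metric.mem_ball.2 ((hnear k hk).trans_le (min_le_right _ _))))
  have hdiff : heightMap Ξ φ (s N) N z - φ z =
      ∑ p ∈ s N, (φ (fun i => (p i : ℝ) / N) - φ z) * Ξ (fun i => N * z i - p i) := by
    simp only [heightMap, sub_mul, Finset.sum_sub_distrib, ← Finset.mul_sum, hsum, mul_one]
  rw [Real.dist_eq, hdiff]
  refine (abs_sum_mul_le_of_sum_le_one (fun _ _ => hΞ0 _) hsum.le (half_pos hε).le
    fun p hp hp0 => ?_).trans_lt (half_lt_self hε)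
  exact (hφδ (hsK N p hp) ((hnear p hp0).trans_le (min_le_left _ _))).le

end PartitionOfUnity

theorem height_map_L2_approximation_general (d : ℕ) (D : Set (Fin d → ℝ))
    (hDopen : IsOpen D) (hDbdd : Bornology.IsBounded D)
    (DN : ℕ → Set (Fin d → ℝ)) (hmono : Monotone DN)
    (hDNopen : ∀ N, ∃ U : Set (Fin d → ℝ), IsOpen U ∧ DN N = U ∩ closure D)
    (hcover : volume (closure D \ ⋃ N, DN N) = 0)
    (G : ℕ → Finset (Fin d → ℤ))
    (hG : ∀ N (k : Fin d → ℤ), k ∈ G N ↔ (fun i => (k i : ℝ) / (N : ℝ)) ∈ DN N)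
    (Ξ : (Fin d → ℝ) → ℝ)
    (hmeas : Measurable Ξ) (h01 : ∀ z, Ξ z ∈ Set.Icc (0 : ℝ) 1)
    (hsupp : Function.support Ξ ⊆ Set.Icc (fun _ => (-1 : ℝ)) (fun _ => (1 : ℝ)))
    (hpart : ∀ z : Fin d → ℝ, ∑' k : Fin d → ℤ, Ξ (fun i => z i - (k i : ℝ)) = 1)
    (φ : (Fin d → ℝ) → ℝ) (hφ : ContinuousOn φ (closure D)) :
    Tendsto (fun N : ℕ =>
        ∫ z in D, (∑ p ∈ G N, φ (fun i => (p i : ℝ) / (N : ℝ)) *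
          Ξ (fun i => (N : ℝ) * z i - (p i : ℝ)) - φ z) ^ 2)
      atTop (𝓝 0) := by
  have hΞ0 : ∀ z, 0 ≤ Ξ z := fun z => (h01 z).1
  have hDNsub : ∀ N, DN N ⊆ closure D := fun N => by
    obtain ⟨U, -, hU⟩ := hDNopen N
    exact hU ▸ Set.inter_subset_right
  have hGD : ∀ N, ∀ p ∈ G N, (fun i => (p i : ℝ) / N) ∈ closure D := fun N p hp =>
    hDNsub N ((hG N p).1 hp)
  obtain ⟨M, hM⟩ := hDbdd.isCompact_closure.exists_bound_of_continuousOn hφ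
  have hφM : ∀ y ∈ closure D, |φ y| ≤ max M 0 := fun y hy => (hM y hy).trans (le_max_left _ _)
  have : IsFiniteMeasure (volume.restrict D) :=
    isFiniteMeasure_restrict.2 hDbdd.measure_lt_top.ne
  have hae : ∀ᵐ z ∂volume.restrict D, z ∈ ⋃ N, DN N := by
    rw [ae_restrict_iff' hDopen.measurableSet, ae_iff]
    refine measure_mono_null (fun z hz => ?_) hcover
    obtain ⟨hzD, hzDN⟩ := Classical.not_imp.1 hz
    exact ⟨subset_closure hzD, hzDN⟩
  refine tendsto_integral_sq_sub_of_tendsto_ae (f := fun N => heightMap Ξ φ (G N) N)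
    (M := max M 0)
    (fun N => (measurable_heightMap hmeas).aestronglyMeasurable)
    ((hφ.mono subset_closure).aestronglyMeasurable hDopen.measurableSet)
    (fun N => .of_forall (abs_heightMap_le hΞ0 hsupp hpart (le_max_right _ _)
      fun p hp => hφM _ (hGD N p hp)))
    (ae_restrict_of_forall_mem hDopen.measurableSet fun z hz => hφM z (subset_closure hz)) ?_
  filter_upwards [ae_restrict_mem hDopen.measurableSet, hae] with z hzD hzDN
  obtain ⟨N₀, hzN₀⟩ := Set.mem_iUnion.1 hzDN
  obtain ⟨U, hUopen, hDN₀⟩ := hDNopen N₀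
  refine tendsto_heightMap hΞ0 hsupp hpart (hφ z (subset_closure hzD)) hGD
    ((hDopen.inter hUopen).mem_nhds ⟨hzD, (hDN₀ ▸ hzN₀).1⟩) ?_
  filter_upwards [eventually_ge_atTop N₀] with N hN k hk
  exact (hG N k).2 (hmono hN (hDN₀ ▸ ⟨hk.2, subset_closure hk.1⟩))

/-- L² approximation of continuous functions by the height-map samples: for every
`φ ∈ C(cl D)`, `∫_D |∑_{p∈G_N} φ(p/N) Ξ(Nz−p) − φ(z)|² dz → 0` as `N → ∞`. -/
theorem height_map_L2_approximation (d : ℕ) (D : Set (Fin d → ℝ))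
    (hDopen : IsOpen D) (hDbdd : Bornology.IsBounded D)
    (DN : ℕ → Set (Fin d → ℝ)) (hmono : Monotone DN)
    (hDNopen : ∀ N, ∃ U : Set (Fin d → ℝ), IsOpen U ∧ DN N = U ∩ closure D)
    (hcover : volume (closure D \ ⋃ N, DN N) = 0)
    (G : ℕ → Finset (Fin d → ℤ))
    (hG : ∀ N (k : Fin d → ℤ), k ∈ G N ↔ (fun i => (k i : ℝ) / (N : ℝ)) ∈ DN N)
    (Ξ : (Fin d → ℝ) → ℝ)
    (hmeas : Measurable Ξ) (h01 : ∀ z, Ξ z ∈ Set.Icc (0 : ℝ) 1)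
    (hsupp : Function.support Ξ ⊆ Set.Icc (fun _ => (-1 : ℝ)) (fun _ => (1 : ℝ)))
    (hint : ∫ z : Fin d → ℝ, Ξ z = 1)
    (hpart : ∀ z : Fin d → ℝ, ∑' k : Fin d → ℤ, Ξ (fun i => z i - (k i : ℝ)) = 1)
    (hsq : 1 / 2 < ∫ z : Fin d → ℝ, (Ξ z) ^ 2)
    (φ : (Fin d → ℝ) → ℝ) (hφ : ContinuousOn φ (closure D)) :
    Tendsto (fun N : ℕ =>
        ∫ z in D, (∑ p ∈ G N, φ (fun i => (p i : ℝ) / (N : ℝ)) *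
          Ξ (fun i => (N : ℝ) * z i - (p i : ℝ)) - φ z) ^ 2)
      atTop (𝓝 0) :=
  height_map_L2_approximation_general d D hDopen hDbdd DN hmono hDNopen hcover G hG Ξ hmeas h01
    hsupp hpart φ hφ
end

section
/- Let H be a separable Hilbert space, (Λ_N), (Λ̃_N) injective linear maps ℝ^{k_N} → H such that the operators Λ̃_N ∘ Λ_N^{−1} are uniformly bounded in operator norm, and suppose for every φ in a dense subset S ⊆ H and every ε > 0 there exist, for all large N, points x ∈ ℝ^{k_N} with ‖Λ_N x − φ‖ < ε and ‖Λ̃_N x − φ‖ < ε. Then for every compact K₁ ⊂ H there is a compact K₂ ⊂ H with ⋃_{N} Λ̃_N(Λ_N^{−1}(K₁)) ⊆ K₂. -/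
/-!
The sets `Λ̃_N(Λ_N⁻¹(K₁))` are totally bounded uniformly in `N`. Cover `K₁` by finitely many
`δ`-balls centred at points `φ` of the dense set `S`. For large `N` each such `φ` is approximated
by `Λ_N x₀` and `Λ̃_N x₀` for a common `x₀`; if `Λ_N x` lies within `δ` of `φ`, then the bound
`‖Λ̃_N (x - x₀)‖ ≤ M ‖Λ_N (x - x₀)‖` puts `Λ̃_N x` within `(2M + 1) δ` of `φ`. So all but
finitely many of the sets lie near one finite set, and each of the remaining ones is totally
bounded by the same Lipschitz-type bound. The closure of the union is then compact.
-/

open Filter Metric NNReal Set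

section PseudoMetricSpace

variable {E : Type*} [PseudoMetricSpace E]

lemma totallyBounded_iUnion_of_eventually_subset_finite_cover {A : ℕ → Set E}
    (hA : ∀ N, TotallyBounded (A N))
    (hcover : ∀ ε > 0, ∃ t : Set E, t.Finite ∧ ∀ᶠ N in atTop, A N ⊆ ⋃ y ∈ t, ball y ε) :
    TotallyBounded (⋃ N, A N) := by
  rw [totallyBounded_iff]
  intro ε hε
  obtain ⟨t, ht, N₀, hN₀⟩ := (hcover ε hε).imp fun _ h ↦ h.imp_right eventually_atTop.1
  have hsmall : TotallyBounded (⋃ N ∈ Finset.range N₀, A N) :=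
    (totallyBounded_biUnion (Finset.range N₀).finite_toSet).2 fun N _ ↦ hA N
  obtain ⟨t', ht', hcover'⟩ := totallyBounded_iff.1 hsmall ε hε
  refine ⟨t' ∪ t, ht'.union ht, ?_⟩
  rintro z ⟨_, ⟨N, rfl⟩, hz⟩
  rcases lt_or_ge N N₀ with hN | hN
  · exact biUnion_mono subset_union_left (fun _ _ ↦ subset_rfl)
      (hcover' (mem_biUnion (Finset.mem_range.2 hN) hz))
  · exact biUnion_mono subset_union_right (fun _ _ ↦ subset_rfl) (hN₀ N hN hz)

section Single

variable {α : Type*} {f g : α → E} {C : ℝ≥0}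

lemma dist_lt_of_dist_le_mul_dist (hgf : ∀ a b, dist (g a) (g b) ≤ C * dist (f a) (f b))
    {a b : α} {φ : E} {δ : ℝ} (ha : dist (f a) φ < δ) (hb : dist (f b) φ < δ)
    (hgb : dist (g b) φ < δ) : dist (g a) φ < (2 * C + 1) * δ :=
  calc dist (g a) φ ≤ dist (g a) (g b) + dist (g b) φ := dist_triangle _ _ _
    _ ≤ C * (dist (f a) φ + dist (f b) φ) + dist (g b) φ := by
        gcongr
        exact (hgf a b).trans (by gcongr; exact dist_triangle_right _ _ _)
    _ < C * (δ + δ) + δ := add_lt_add_of_le_of_lt (by gcongr) hgb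
    _ = (2 * C + 1) * δ := by ring

lemma TotallyBounded.image_preimage_of_dist_le_mul_dist
    (hgf : ∀ a b, dist (g a) (g b) ≤ C * dist (f a) (f b)) {K : Set E}
    (hK : TotallyBounded K) : TotallyBounded (g '' (f ⁻¹' K)) := by
  rw [totallyBounded_iff]
  intro ε hε
  have hfK : TotallyBounded (f '' (f ⁻¹' K)) :=
    hK.subset (image_preimage_subset f K)
  obtain ⟨s, -, hs, hcover⟩ := exists_subset_image_finite_and.1
    (finite_approx_of_totallyBounded hfK (ε / (C + 1)) (by positivity))
  refine ⟨g '' s, hs.image g, ?_⟩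
  rintro _ ⟨a, haK, rfl⟩
  obtain ⟨_, ⟨b, hbs, rfl⟩, hab⟩ := mem_iUnion₂.1 (hcover (mem_image_of_mem f haK))
  refine mem_biUnion (mem_image_of_mem g hbs) (mem_ball.2 ?_)
  calc dist (g a) (g b) ≤ C * dist (f a) (f b) := hgf a b
    _ ≤ C * (ε / (C + 1)) := by gcongr; exact (mem_ball.1 hab).le
    _ < ε := by
        rw [mul_div_assoc', div_lt_iff₀ (by positivity)]
        nlinarith

end Single

lemma totallyBounded_iUnion_image_preimage {α : ℕ → Type*} {f g : ∀ N, α N → E} {C : ℝ≥0}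
    (hgf : ∀ N a b, dist (g N a) (g N b) ≤ C * dist (f N a) (f N b))
    {S : Set E} (hS : Dense S)
    (happrox : ∀ φ ∈ S, ∀ ε > 0, ∀ᶠ N in atTop, ∃ a, dist (f N a) φ < ε ∧ dist (g N a) φ < ε)
    {K : Set E} (hK : IsCompact K) :
    TotallyBounded (⋃ N, g N '' (f N ⁻¹' K)) := by
  refine totallyBounded_iUnion_of_eventually_subset_finite_cover
    (fun N ↦ hK.totallyBounded.image_preimage_of_dist_le_mul_dist (hgf N)) fun ε hε ↦ ?_
  set δ := ε / (2 * C + 1)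
  have hδ : 0 < δ := by positivity
  have hKS : K ⊆ ⋃ φ ∈ S, ball φ δ := fun y _ ↦
    let ⟨φ, hφS, hyφ⟩ := hS.exists_dist_lt y hδ
    mem_biUnion hφS (mem_ball.2 (dist_comm y φ ▸ hyφ))
  obtain ⟨t, htS, ht, hKt⟩ := hK.elim_finite_subcover_image (fun _ _ ↦ isOpen_ball) hKS
  refine ⟨t, ht, ((ht.eventually_all).2 fun φ hφ ↦ happrox φ (htS hφ) δ hδ).mono ?_⟩
  rintro N hN _ ⟨a, haK, rfl⟩
  obtain ⟨φ, hφt, haφ⟩ := mem_iUnion₂.1 (hKt haK)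
  obtain ⟨b, hbφ, hgbφ⟩ := hN φ hφt
  refine mem_biUnion hφt (mem_ball.2 ?_)
  calc dist (g N a) φ < (2 * C + 1) * δ := dist_lt_of_dist_le_mul_dist (hgf N) haφ hbφ hgbφ
    _ = ε := mul_div_cancel₀ ε (by positivity)

end PseudoMetricSpace

theorem compact_containment_of_height_maps_general
    {H : Type*} [NormedAddCommGroup H] [InnerProductSpace ℝ H] [CompleteSpace H]
    (k : ℕ → ℕ)
    (Λ Λt : ∀ N : ℕ, EuclideanSpace ℝ (Fin (k N)) →ₗ[ℝ] H)
    (M : ℝ) (hM : ∀ (N : ℕ) x, ‖Λt N x‖ ≤ M * ‖Λ N x‖)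
    (S : Set H) (hS : Dense S)
    (happrox : ∀ φ ∈ S, ∀ ε > (0 : ℝ), ∃ N₀ : ℕ, ∀ N ≥ N₀,
      ∃ x : EuclideanSpace ℝ (Fin (k N)), ‖Λ N x - φ‖ < ε ∧ ‖Λt N x - φ‖ < ε)
    (K₁ : Set H) (hK₁ : IsCompact K₁) :
    ∃ K₂ : Set H, IsCompact K₂ ∧
      ∀ (N : ℕ) (x : EuclideanSpace ℝ (Fin (k N))), Λ N x ∈ K₁ → Λt N x ∈ K₂ := by
  have hdist : ∀ N x y, dist (Λt N x) (Λt N y) ≤ M.toNNReal * dist (Λ N x) (Λ N y) := by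
    intro N x y
    simp only [dist_eq_norm, ← map_sub, Real.coe_toNNReal']
    exact (hM N (x - y)).trans (by gcongr; exact le_max_left M 0)
  have hbounded := totallyBounded_iUnion_image_preimage hdist hS
    (by simpa only [dist_eq_norm, eventually_atTop] using happrox) hK₁
  exact ⟨_, hbounded.closure.isCompact_of_isClosed isClosed_closure,
    fun N x hx ↦ subset_closure (mem_iUnion.2 ⟨N, mem_image_of_mem _ hx⟩)⟩

/-- Uniform compact containment: if the composites `Λ̃_N ∘ Λ_N⁻¹` are uniformly bounded
and both height maps approximate a dense set of points of `H`, then for every compact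
`K₁ ⊆ H` there is a compact `K₂ ⊆ H` with `⋃_N Λ̃_N(Λ_N⁻¹(K₁)) ⊆ K₂`. -/
theorem compact_containment_of_height_maps
    {H : Type*} [NormedAddCommGroup H] [InnerProductSpace ℝ H] [CompleteSpace H]
    [SecondCountableTopology H]
    (k : ℕ → ℕ)
    (Λ Λt : ∀ N : ℕ, EuclideanSpace ℝ (Fin (k N)) →ₗ[ℝ] H)
    (hinj : ∀ N, Function.Injective (Λ N)) (hinjt : ∀ N, Function.Injective (Λt N))
    (M : ℝ) (hM : ∀ (N : ℕ) x, ‖Λt N x‖ ≤ M * ‖Λ N x‖)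
    (S : Set H) (hS : Dense S)
    (happrox : ∀ φ ∈ S, ∀ ε > (0 : ℝ), ∃ N₀ : ℕ, ∀ N ≥ N₀,
      ∃ x : EuclideanSpace ℝ (Fin (k N)), ‖Λ N x - φ‖ < ε ∧ ‖Λt N x - φ‖ < ε)
    (K₁ : Set H) (hK₁ : IsCompact K₁) :
    ∃ K₂ : Set H, IsCompact K₂ ∧
      ∀ (N : ℕ) (x : EuclideanSpace ℝ (Fin (k N))), Λ N x ∈ K₁ → Λt N x ∈ K₂ :=
  compact_containment_of_height_maps_general k Λ Λt M hM S hS happrox K₁ hK₁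
end

section
/- Let (g_N) be a sequence of bounded monotone increasing functions on ℝ and g : ℝ → ℝ bounded, such that for every δ > 0, sup_{x∈ℝ} inf_{|r|≤δ} |g(x) − g_N(x+r)| → 0 as N → ∞. Then for each m ∈ ℕ there exist continuous bounded functions g_{N,m}^min, g_{N,m}^maj with −‖g_N‖_∞ ≤ g_{N,m}^min ≤ g_N ≤ g_{N,m}^maj ≤ ‖g_N‖_∞, continuous limits g_m^min, g_m^maj with ‖g_{N,m}^min − g_m^min‖_∞ → 0 and ‖g_{N,m}^maj − g_m^maj‖_∞ → 0 as N → ∞, and such that g_m^min(x) → g(x) and g_m^maj(x) → g(x) as m → ∞ at every continuity point x of g. -/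
/-!
Replace `g_N` by its averages over windows of length `h = 1/(m+1)`: averaging over `[x - h, x]`
gives a continuous minorant and over `[x, x + h]` a continuous majorant, both bounded by `‖g_N‖_∞`.
Since `g` is uniformly close to small shifts of every `g_N` with `N` large, monotonicity gives
`g_N t ≤ g_M (t + 2δ) + o(1)`, and averaging a function bounded by `C` over a window of length `h`
is `2C/h`-Lipschitz; hence the averages are uniformly Cauchy in `N`. Their uniform limit at `x` is
within the oscillation of `g` on `[x - 2h, x + 2h]` of `g x`, which vanishes at continuity points.
-/

open MeasureTheory Filter Topology

noncomputable def supNorm (f : ℝ → ℝ) : ℝ := ⨆ x : ℝ, |f x|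

open Set

noncomputable def slidingAverage (f : ℝ → ℝ) (h a x : ℝ) : ℝ :=
  (∫ t in (x + a)..(x + a + h), f t) / h

section SlidingAverage

variable {f : ℝ → ℝ} {h a c : ℝ}

lemma slidingAverage_le (hf : ∀ u v, IntervalIntegrable f volume u v) (hh : 0 < h) {x : ℝ}
    (hc : ∀ t ∈ Icc (x + a) (x + a + h), f t ≤ c) : slidingAverage f h a x ≤ c := by
  rw [slidingAverage, div_le_iff₀ hh]
  calc ∫ t in (x + a)..(x + a + h), f t ≤ ∫ _ in (x + a)..(x + a + h), c :=
        intervalIntegral.integral_mono_on (by linarith) (hf _ _) intervalIntegrable_const hc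
    _ = c * h := by rw [intervalIntegral.integral_const, smul_eq_mul]; ring

lemma le_slidingAverage (hf : ∀ u v, IntervalIntegrable f volume u v) (hh : 0 < h) {x : ℝ}
    (hc : ∀ t ∈ Icc (x + a) (x + a + h), c ≤ f t) : c ≤ slidingAverage f h a x := by
  rw [slidingAverage, le_div_iff₀ hh]
  calc c * h = ∫ _ in (x + a)..(x + a + h), c := by
        rw [intervalIntegral.integral_const, smul_eq_mul]; ring
    _ ≤ ∫ t in (x + a)..(x + a + h), f t :=
        intervalIntegral.integral_mono_on (by linarith) intervalIntegrable_const (hf _ _) hc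

lemma abs_slidingAverage_le (hf : ∀ u v, IntervalIntegrable f volume u v) (hh : 0 < h)
    (hc : ∀ t, |f t| ≤ c) (x : ℝ) : |slidingAverage f h a x| ≤ c :=
  abs_le.2 ⟨le_slidingAverage hf hh fun t _ => (abs_le.1 (hc t)).1,
    slidingAverage_le hf hh fun t _ => (abs_le.1 (hc t)).2⟩

lemma Monotone.slidingAverage_le_self (hf : Monotone f) (hh : 0 < h) (x : ℝ) :
    slidingAverage f h (-h) x ≤ f x :=
  slidingAverage_le (fun _ _ => hf.intervalIntegrable) hh fun _ ht => hf (by linarith [ht.2])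

lemma Monotone.le_slidingAverage_self (hf : Monotone f) (hh : 0 < h) (x : ℝ) :
    f x ≤ slidingAverage f h 0 x :=
  le_slidingAverage (fun _ _ => hf.intervalIntegrable) hh fun _ ht => hf (by linarith [ht.1])

lemma continuous_slidingAverage (hf : ∀ u v, IntervalIntegrable f volume u v) :
    Continuous (slidingAverage f h a) := by
  have hF := intervalIntegral.continuous_primitive hf 0
  have heq : slidingAverage f h a =
      fun x => ((∫ t in (0 : ℝ)..(x + a + h), f t) - ∫ t in (0 : ℝ)..(x + a), f t) / h := by
    ext x
    rw [slidingAverage, intervalIntegral.integral_interval_sub_left (hf _ _) (hf _ _)]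
  rw [heq]
  fun_prop

lemma abs_slidingAverage_sub_slidingAverage_le (hf : ∀ u v, IntervalIntegrable f volume u v)
    (hh : 0 < h) (hc : ∀ t, |f t| ≤ c) (x y : ℝ) :
    |slidingAverage f h a x - slidingAverage f h a y| ≤ 2 * c / h * |x - y| := by
  have hprim : ∀ u v, |∫ t in u..v, f t| ≤ c * |v - u| := fun u v =>
    intervalIntegral.norm_integral_le_of_norm_le_const (f := f) fun t _ => hc t
  rw [slidingAverage, slidingAverage, ← sub_div,
    intervalIntegral.integral_interval_sub_interval_comm (hf _ _) (hf _ _) (hf _ _), abs_div,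
    abs_of_pos hh, div_le_iff₀ hh]
  calc _ ≤ |∫ t in (x + a)..(y + a), f t| + |∫ t in (x + a + h)..(y + a + h), f t| :=
        abs_sub _ _
    _ ≤ c * |y + a - (x + a)| + c * |y + a + h - (x + a + h)| :=
        add_le_add (hprim _ _) (hprim _ _)
    _ = 2 * c / h * |x - y| * h := by
        rw [abs_sub_comm x y]; field_simp; ring_nf

lemma slidingAverage_le_add_of_le_comp_add {f₁ f₂ : ℝ → ℝ}
    (hf₁ : ∀ u v, IntervalIntegrable f₁ volume u v) (hf₂ : ∀ u v, IntervalIntegrable f₂ volume u v)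
    (hh : 0 < h) {s ε : ℝ} (hs : 0 ≤ s) (hc : ∀ t, |f₂ t| ≤ c)
    (hle : ∀ t, f₁ t ≤ f₂ (t + s) + ε) (x : ℝ) :
    slidingAverage f₁ h a x ≤ slidingAverage f₂ h a x + 2 * c / h * s + ε := by
  have hshift : slidingAverage f₁ h a x ≤ slidingAverage f₂ h a (x + s) + ε := by
    have hint : IntervalIntegrable (fun t => f₂ (t + s)) volume (x + a) (x + a + h) := by
      simpa using (hf₂ (x + a + s) (x + a + h + s)).comp_add_right s
    rw [slidingAverage, slidingAverage, div_add' _ _ _ hh.ne', div_le_div_iff_of_pos_right hh]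
    calc ∫ t in (x + a)..(x + a + h), f₁ t ≤ ∫ t in (x + a)..(x + a + h), (f₂ (t + s) + ε) :=
          intervalIntegral.integral_mono_on (by linarith) (hf₁ _ _)
            (hint.add intervalIntegrable_const) fun t _ => hle t
      _ = (∫ t in (x + s + a)..(x + s + a + h), f₂ t) + ε * h := by
          rw [intervalIntegral.integral_add hint intervalIntegrable_const,
            intervalIntegral.integral_comp_add_right, intervalIntegral.integral_const,
            smul_eq_mul]
          ring_nf
  have hlip := abs_sub_le_iff.1
    (abs_slidingAverage_sub_slidingAverage_le (a := a) hf₂ hh hc (x + s) x)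
  rw [add_sub_cancel_left, abs_of_nonneg hs] at hlip
  linarith [hlip.1]

end SlidingAverage

noncomputable def shiftDist (g f : ℝ → ℝ) (δ : ℝ) : ℝ :=
  ⨆ x : ℝ, ⨅ r : Icc (-δ) δ, |g x - f (x + r)|

section ShiftDist

variable {g f : ℝ → ℝ} {δ : ℝ}

lemma exists_abs_sub_lt_shiftDist_add (hg : BddAbove (range fun x => |g x|))
    (hf : BddAbove (range fun x => |f x|)) (hδ : 0 ≤ δ) (x : ℝ) {ε : ℝ} (hε : 0 < ε) :
    ∃ r ∈ Icc (-δ) δ, |g x - f (x + r)| < shiftDist g f δ + ε := by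
  obtain ⟨Bg, hBg⟩ := hg
  obtain ⟨Bf, hBf⟩ := hf
  have h0 : (0 : ℝ) ∈ Icc (-δ) δ := ⟨by linarith, hδ⟩
  have : Nonempty (Icc (-δ) δ) := ⟨⟨0, h0⟩⟩
  have hinf_le : ∀ y, ⨅ r : Icc (-δ) δ, |g y - f (y + r)| ≤ Bg + Bf := fun y =>
    calc ⨅ r : Icc (-δ) δ, |g y - f (y + r)| ≤ |g y - f (y + 0)| :=
          ciInf_le ⟨0, by rintro _ ⟨r, rfl⟩; positivity⟩ (⟨0, h0⟩ : Icc (-δ) δ)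
      _ ≤ |g y| + |f (y + 0)| := abs_sub _ _
      _ ≤ Bg + Bf := add_le_add (hBg ⟨y, rfl⟩) (hBf ⟨y + 0, rfl⟩)
  have hinf_lt : ⨅ r : Icc (-δ) δ, |g x - f (x + r)| < shiftDist g f δ + ε :=
    (le_ciSup ⟨Bg + Bf, by rintro _ ⟨y, rfl⟩; exact hinf_le y⟩ x).trans_lt
      (lt_add_of_pos_right _ hε)
  obtain ⟨r, hr⟩ := exists_lt_of_ciInf_lt hinf_lt
  exact ⟨r, r.2, hr⟩

lemma Monotone.apply_le_add_shiftDist (hmono : Monotone f) (hg : BddAbove (range fun x => |g x|))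
    (hf : BddAbove (range fun x => |f x|)) (hδ : 0 ≤ δ) (x : ℝ) :
    f x ≤ g (x + δ) + shiftDist g f δ := by
  refine le_of_forall_pos_lt_add fun ε hε => ?_
  obtain ⟨r, hr, hlt⟩ := exists_abs_sub_lt_shiftDist_add hg hf hδ (x + δ) hε
  have : f x ≤ f (x + δ + r) := hmono (by linarith [hr.1])
  linarith [(abs_lt.1 hlt).1]

lemma Monotone.le_apply_add_shiftDist (hmono : Monotone f) (hg : BddAbove (range fun x => |g x|))
    (hf : BddAbove (range fun x => |f x|)) (hδ : 0 ≤ δ) (x : ℝ) :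
    g x ≤ f (x + δ) + shiftDist g f δ := by
  refine le_of_forall_pos_lt_add fun ε hε => ?_
  obtain ⟨r, hr, hlt⟩ := exists_abs_sub_lt_shiftDist_add hg hf hδ x hε
  have : f (x + r) ≤ f (x + δ) := hmono (by linarith [hr.2])
  linarith [(abs_lt.1 hlt).2]

lemma Monotone.abs_le_add_shiftDist (hmono : Monotone f) {B : ℝ} (hgB : ∀ x, |g x| ≤ B)
    (hf : BddAbove (range fun x => |f x|)) (hδ : 0 ≤ δ) (x : ℝ) :
    |f x| ≤ B + shiftDist g f δ := by
  have hg : BddAbove (range fun x => |g x|) := ⟨B, by rintro _ ⟨y, rfl⟩; exact hgB y⟩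
  have hup := hmono.apply_le_add_shiftDist hg hf hδ x
  have hlow := hmono.le_apply_add_shiftDist hg hf hδ (x - δ)
  rw [sub_add_cancel] at hlow
  rw [abs_le]
  constructor <;> linarith [abs_le.1 (hgB (x + δ)), abs_le.1 (hgB (x - δ))]

lemma Monotone.apply_le_apply_add_shiftDist {f₁ f₂ : ℝ → ℝ} (hmono₁ : Monotone f₁)
    (hmono₂ : Monotone f₂) (hg : BddAbove (range fun x => |g x|))
    (hf₁ : BddAbove (range fun x => |f₁ x|)) (hf₂ : BddAbove (range fun x => |f₂ x|))
    (hδ : 0 ≤ δ) (x : ℝ) :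
    f₁ x ≤ f₂ (x + 2 * δ) + (shiftDist g f₁ δ + shiftDist g f₂ δ) := by
  have h₁ := hmono₁.apply_le_add_shiftDist hg hf₁ hδ x
  have h₂ := hmono₂.le_apply_add_shiftDist hg hf₂ hδ (x + δ)
  rw [add_assoc, ← two_mul] at h₂
  linarith

lemma Monotone.abs_slidingAverage_sub_le_add_shiftDist (hmono : Monotone f)
    (hg : BddAbove (range fun x => |g x|)) (hf : BddAbove (range fun x => |f x|))
    {h a : ℝ} (hh : 0 < h) (ha : a ∈ Icc (-h) 0) (hδ : 0 ≤ δ) {x η : ℝ}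
    (hη : ∀ y, |y - x| ≤ h + δ → |g y - g x| ≤ η) :
    |slidingAverage f h a x - g x| ≤ η + shiftDist g f δ := by
  have hint : ∀ u v, IntervalIntegrable f volume u v := fun _ _ => hmono.intervalIntegrable
  have hnear : ∀ t ∈ Icc (x + a) (x + a + h), ∀ s, |s| ≤ δ → |g (t + s) - g x| ≤ η :=
    fun t ht s hs => hη _ (abs_le.2 ⟨by linarith [ht.1, ha.1, (abs_le.1 hs).1],
      by linarith [ht.2, ha.2, (abs_le.1 hs).2]⟩)
  rw [abs_sub_le_iff]
  constructor
  · refine sub_left_le_of_le_add (slidingAverage_le hint hh fun t ht => ?_)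
    have := hnear t ht δ (abs_of_nonneg hδ).le
    linarith [hmono.apply_le_add_shiftDist hg hf hδ t, (abs_le.1 this).2]
  · refine sub_le_comm.1 (le_slidingAverage hint hh fun t ht => ?_)
    have := hnear t ht (-δ) (by rw [abs_neg, abs_of_nonneg hδ])
    have hlow := hmono.le_apply_add_shiftDist hg hf hδ (t + -δ)
    rw [neg_add_cancel_right] at hlow
    linarith [(abs_le.1 this).1]

end ShiftDist

lemma exists_continuous_tendstoUniformly {α β : Type*} [TopologicalSpace α] [UniformSpace β]
    [CompleteSpace β] [Nonempty β] {F : ℕ → α → β} (hF : ∀ N, Continuous (F N))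
    (hcauchy : UniformCauchySeqOn F atTop univ) :
    ∃ G : α → β, Continuous G ∧ TendstoUniformly F G atTop := by
  have hlim : ∀ x, Tendsto (fun N => F N x) atTop (𝓝 (limUnder atTop fun N => F N x)) :=
    fun x => (hcauchy.cauchySeq (mem_univ x)).tendsto_limUnder
  have hunif := tendstoUniformlyOn_univ.1 (hcauchy.tendstoUniformlyOn_of_tendsto fun x _ => hlim x)
  exact ⟨_, hunif.continuous (Frequently.of_forall hF), hunif⟩

lemma TendstoUniformly.tendsto_iSup_abs_sub {α : Type*} {F : ℕ → α → ℝ} {G : α → ℝ}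
    (hFG : TendstoUniformly F G atTop) :
    Tendsto (fun N => ⨆ x, |F N x - G x|) atTop (𝓝 0) := by
  refine Metric.tendsto_atTop.2 fun ε hε => ?_
  obtain ⟨N₀, hN₀⟩ := eventually_atTop.1 (Metric.tendstoUniformly_iff.1 hFG (ε / 2) (half_pos hε))
  refine ⟨N₀, fun N hN => ?_⟩
  have hle : ∀ x, |F N x - G x| ≤ ε / 2 := fun x => by
    rw [abs_sub_comm, ← Real.dist_eq]; exact (hN₀ N hN x).le
  rw [Real.dist_eq, sub_zero, abs_of_nonneg (Real.iSup_nonneg fun _ => abs_nonneg _)]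
  exact (Real.iSup_le hle (half_pos hε).le).trans_lt (half_lt_self hε)

section Approximation

variable {gN : ℕ → ℝ → ℝ} {g : ℝ → ℝ}

lemma uniformCauchySeqOn_slidingAverage (hmono : ∀ N, Monotone (gN N))
    (hbN : ∀ N, BddAbove (range fun x => |gN N x|)) (hbg : BddAbove (range fun x => |g x|))
    (happrox : ∀ δ > (0 : ℝ), Tendsto (fun N => shiftDist g (gN N) δ) atTop (𝓝 0))
    {h : ℝ} (hh : 0 < h) (a : ℝ) :
    UniformCauchySeqOn (fun N => slidingAverage (gN N) h a) atTop univ := by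
  obtain ⟨B, hB⟩ := hbg
  have hgB : ∀ x, |g x| ≤ B := fun x => hB ⟨x, rfl⟩
  have hB1 : 0 < B + 1 := by linarith [(abs_nonneg (g 0)).trans (hgB 0)]
  have hint : ∀ N u v, IntervalIntegrable (gN N) volume u v :=
    fun N _ _ => (hmono N).intervalIntegrable
  refine Metric.uniformCauchySeqOn_iff.2 fun ε hε => ?_
  -- `δ` is chosen so that the window-shift error `2 (B + 1) / h * 2δ` equals `ε / 4`
  set δ := ε * h / (16 * (B + 1)) with hδ_def
  have hδ : 0 < δ := by positivity
  obtain ⟨N₀, hN₀⟩ := eventually_atTop.1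
    ((happrox δ hδ).eventually (eventually_lt_nhds (lt_min (by positivity) one_pos :
      (0 : ℝ) < min (ε / 4) 1)))
  have hsmall : ∀ N ≥ N₀, shiftDist g (gN N) δ < ε / 4 ∧ shiftDist g (gN N) δ < 1 :=
    fun N hN => lt_min_iff.1 (hN₀ N hN)
  have hone_side : ∀ N ≥ N₀, ∀ M ≥ N₀, ∀ x,
      slidingAverage (gN N) h a x < slidingAverage (gN M) h a x + ε := by
    intro N hN M hM x
    have hbound : ∀ t, |gN M t| ≤ B + 1 := fun t =>
      ((hmono M).abs_le_add_shiftDist hgB (hbN M) hδ.le t).trans (by linarith [hsmall M hM])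
    have hcmp := slidingAverage_le_add_of_le_comp_add (a := a) (hint N) (hint M) hh
      (by positivity) hbound
      ((hmono N).apply_le_apply_add_shiftDist (hmono M) ⟨B, hB⟩ (hbN N) (hbN M) hδ.le) x
    have herr : 2 * (B + 1) / h * (2 * δ) = ε / 4 := by
      rw [hδ_def]; field_simp; ring
    linarith [(hsmall N hN).1, (hsmall M hM).1]
  exact ⟨N₀, fun N hN M hM x _ => by
    rw [Real.dist_eq, abs_sub_lt_iff]
    exact ⟨by linarith [hone_side N hN M hM x], by linarith [hone_side M hM N hN x]⟩⟩

lemma abs_sub_le_of_tendsto_slidingAverage (hmono : ∀ N, Monotone (gN N))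
    (hbN : ∀ N, BddAbove (range fun x => |gN N x|)) (hbg : BddAbove (range fun x => |g x|))
    (happrox : ∀ δ > (0 : ℝ), Tendsto (fun N => shiftDist g (gN N) δ) atTop (𝓝 0))
    {h a : ℝ} (hh : 0 < h) (ha : a ∈ Icc (-h) 0) {x y η : ℝ}
    (hy : Tendsto (fun N => slidingAverage (gN N) h a x) atTop (𝓝 y))
    (hη : ∀ z, |z - x| ≤ 2 * h → |g z - g x| ≤ η) :
    |y - g x| ≤ η := by
  have hbound : Tendsto (fun N => η + shiftDist g (gN N) h) atTop (𝓝 η) := by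
    simpa using (happrox h hh).const_add η
  exact le_of_tendsto_of_tendsto' ((hy.sub_const (g x)).abs) hbound fun N =>
    (hmono N).abs_slidingAverage_sub_le_add_shiftDist hbg (hbN N) hh ha hh.le fun z hz =>
      hη z (by linarith)

end Approximation

lemma tendsto_of_abs_sub_le_of_continuousAt {g : ℝ → ℝ} {x : ℝ} {y h : ℕ → ℝ}
    (hh : Tendsto h atTop (𝓝 0))
    (hy : ∀ m η, (∀ z, |z - x| ≤ 2 * h m → |g z - g x| ≤ η) → |y m - g x| ≤ η)
    (hx : ContinuousAt g x) : Tendsto y atTop (𝓝 (g x)) := by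
  refine Metric.tendsto_nhds.2 fun ε hε => ?_
  obtain ⟨δ, hδ, hgδ⟩ := Metric.continuousAt_iff.1 hx (ε / 2) (half_pos hε)
  filter_upwards [hh.eventually (eventually_lt_nhds (half_pos hδ))] with m hm
  refine (hy m (ε / 2) fun z hz => (hgδ ?_).le).trans_lt (half_lt_self hε)
  rw [Real.dist_eq]
  linarith

/-- Lemma A.2: continuous monotone approximation. If `(g_N)` are bounded monotone
increasing functions and `g` is bounded with
`sup_x inf_{|r|≤δ} |g(x) − g_N(x+r)| → 0` for each `δ > 0`, then for each `m` there are
continuous minorants `g_{N,m}^min ≤ g_N` and majorants `g_{N,m}^maj ≥ g_N`, bounded by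
`±‖g_N‖_∞`, converging uniformly in `N` to continuous limits `g_m^min, g_m^maj`, which in
turn converge to `g` at every continuity point as `m → ∞`. -/
theorem monotone_approximation_minorant_majorant
    (gN : ℕ → ℝ → ℝ) (g : ℝ → ℝ)
    (hmono : ∀ N, Monotone (gN N))
    (hbN : ∀ N, BddAbove (Set.range fun x => |gN N x|))
    (hbg : BddAbove (Set.range fun x => |g x|))
    (happrox : ∀ δ > (0 : ℝ),
      Tendsto (fun N => ⨆ x : ℝ, ⨅ r : Set.Icc (-δ) δ, |g x - gN N (x + (r : ℝ))|)
        atTop (𝓝 0)) :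
    ∃ (gmin gmaj : ℕ → ℕ → ℝ → ℝ) (glmin glmaj : ℕ → ℝ → ℝ),
      (∀ N m, Continuous (gmin N m) ∧ Continuous (gmaj N m)) ∧
      (∀ N m x, -supNorm (gN N) ≤ gmin N m x ∧ gmin N m x ≤ gN N x ∧
        gN N x ≤ gmaj N m x ∧ gmaj N m x ≤ supNorm (gN N)) ∧
      (∀ m, Continuous (glmin m) ∧ Continuous (glmaj m)) ∧
      (∀ m, Tendsto (fun N => ⨆ x : ℝ, |gmin N m x - glmin m x|) atTop (𝓝 0) ∧
        Tendsto (fun N => ⨆ x : ℝ, |gmaj N m x - glmaj m x|) atTop (𝓝 0)) ∧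
      (∀ x : ℝ, ContinuousAt g x →
        Tendsto (fun m => glmin m x) atTop (𝓝 (g x)) ∧
        Tendsto (fun m => glmaj m x) atTop (𝓝 (g x))) := by
  set step : ℕ → ℝ := fun m => 1 / ((m : ℝ) + 1)
  have hstep : ∀ m, 0 < step m := fun m => by positivity
  have hint : ∀ N u v, IntervalIntegrable (gN N) volume u v :=
    fun N _ _ => (hmono N).intervalIntegrable
  choose G hGcont hGunif using fun m a => exists_continuous_tendstoUniformly
    (fun N => continuous_slidingAverage (hint N))
    (uniformCauchySeqOn_slidingAverage hmono hbN hbg happrox (hstep m) a)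
  have hconv : ∀ a : ℕ → ℝ, (∀ m, a m ∈ Icc (-step m) 0) → ∀ x, ContinuousAt g x →
      Tendsto (fun m => G m (a m) x) atTop (𝓝 (g x)) := fun a ha x hx =>
    tendsto_of_abs_sub_le_of_continuousAt tendsto_one_div_add_atTop_nhds_zero_nat
      (fun m _ => abs_sub_le_of_tendsto_slidingAverage hmono hbN hbg happrox (hstep m) (ha m)
        ((hGunif m (a m)).tendsto_at x)) hx
  have hlower : ∀ m, -step m ∈ Icc (-step m) 0 := fun m => ⟨le_rfl, by linarith [hstep m]⟩
  have hupper : ∀ m, (0 : ℝ) ∈ Icc (-step m) 0 := fun m => ⟨by linarith [hstep m], le_rfl⟩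
  refine ⟨fun N m => slidingAverage (gN N) (step m) (-step m),
    fun N m => slidingAverage (gN N) (step m) 0, fun m => G m (-step m), fun m => G m 0,
    fun N m => ⟨continuous_slidingAverage (hint N), continuous_slidingAverage (hint N)⟩,
    fun N m x => ?_, fun m => ⟨hGcont _ _, hGcont _ _⟩,
    fun m => ⟨(hGunif _ _).tendsto_iSup_abs_sub, (hGunif _ _).tendsto_iSup_abs_sub⟩,
    fun x hx => ⟨hconv _ hlower x hx, hconv _ hupper x hx⟩⟩
  have hsup : ∀ t, |gN N t| ≤ supNorm (gN N) := le_ciSup (hbN N)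
  exact ⟨(abs_le.1 (abs_slidingAverage_le (hint N) (hstep m) hsup x)).1,
    (hmono N).slidingAverage_le_self (hstep m) x, (hmono N).le_slidingAverage_self (hstep m) x,
    (abs_le.1 (abs_slidingAverage_le (hint N) (hstep m) hsup x)).2⟩
end

section
/- Let D ⊆ ℝ^d be a domain and μ a non-degenerate centred Gaussian measure on H = L²(D). Then for every a ∈ ℝ, the level set {z ∈ D : h(z) = a} has Lebesgue measure zero for μ-almost every h ∈ H. -/
open MeasureTheory

/-- A Borel probability measure `μ` on a real inner product space is a centred Gaussian
measure if every continuous linear functional pushes it forward to a centred Gaussian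
measure on `ℝ`. -/
def IsCenteredGaussian {H : Type*} [NormedAddCommGroup H] [InnerProductSpace ℝ H]
    [MeasurableSpace H] (μ : Measure H) : Prop :=
  ∀ L : H →L[ℝ] ℝ, ∃ v : NNReal, μ.map L = ProbabilityTheory.gaussianReal 0 v

/-!
Let `L n z f` be the average of `f` over the ball of radius `1 / (n + 1)` around `z`. For fixed
`n` and `z` this is a continuous linear functional, hence a centred Gaussian `N(0, v n z)` under
`μ`, and by Lebesgue differentiation `L n z f → f z` for a.e. `z`, for every `f`.

Fix `z`. If `L n z f → a` on a set of positive `μ`-measure `q`, then the Gaussians put mass about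
`q` on ever smaller intervals around `a`; since their densities are bounded by
`1 / √(2π v n z)`, this forces `v n z → 0`. Then `L n z → 0` in `μ`-measure, so along a
subsequence `L n z f → 0` for `μ`-a.e. `f`: hence `a = 0`, and for `μ`-a.e. `f` the sequence
`L n z f` can only converge to `a`.

If the set `W` of such `z` had positive Lebesgue measure, Fubini would make `μ`-a.e. `f` equal
to `a` a.e. on `W`, so that `f ↦ ⟪1_T, f⟫` would be `μ`-a.s. constant for some `T ⊆ W` of finite
positive measure. A continuous non-constant function cannot be a.s. constant for a measure
charging every open set. So `W` is null, and Fubini again shows that `μ`-a.e. `f` has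
`L n z f ↛ a`, hence `f z ≠ a`, for a.e. `z`.
-/

open Filter Metric ProbabilityTheory Real
open scoped Topology ENNReal NNReal symmDiff

lemma measure_setOf_eventually_mem_le_liminf {α : Type*} [MeasurableSpace α] (μ : Measure α)
    (s : ℕ → Set α) : μ {x | ∀ᶠ n in atTop, x ∈ s n} ≤ liminf (fun n ↦ μ (s n)) atTop := by
  have hset : {x | ∀ᶠ n in atTop, x ∈ s n} = ⋃ N, ⋂ n ≥ N, s n := by
    ext x
    simp [eventually_atTop]
  have hmono : Monotone fun N ↦ ⋂ n ≥ N, s n :=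
    fun N M hNM ↦ Set.biInter_mono (fun n hn ↦ le_trans hNM hn) fun _ _ ↦ le_rfl
  rw [hset, hmono.measure_iUnion, liminf_eq_iSup_iInf_of_nat]
  exact iSup_mono fun N ↦ le_iInf₂ fun n hn ↦ measure_mono (Set.biInter_subset_of_mem hn)

lemma gaussianReal_closedBall_le (m : ℝ) {v : ℝ≥0} (hv : v ≠ 0) (c ε : ℝ) :
    gaussianReal m v (closedBall c ε) ≤ ENNReal.ofReal (2 * ε / √(2 * π * v)) := by
  have hpdf (x : ℝ) : gaussianPDFReal m v x ≤ (√(2 * π * v))⁻¹ := by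
    rw [gaussianPDFReal_def]
    refine mul_le_of_le_one_right (by positivity) (exp_le_one_iff.2 ?_)
    exact div_nonpos_of_nonpos_of_nonneg (neg_nonpos.2 (sq_nonneg _)) (by positivity)
  calc gaussianReal m v (closedBall c ε)
      = ∫⁻ x in closedBall c ε, gaussianPDF m v x := gaussianReal_apply m hv _
    _ ≤ ∫⁻ _ in closedBall c ε, ENNReal.ofReal (√(2 * π * v))⁻¹ :=
        setLIntegral_mono measurable_const fun x _ ↦ ENNReal.ofReal_le_ofReal (hpdf x)
    _ = ENNReal.ofReal (2 * ε / √(2 * π * v)) := by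
        rw [setLIntegral_const, Real.volume_closedBall, ← ENNReal.ofReal_mul (by positivity),
          div_eq_inv_mul]

lemma gaussianReal_setOf_le_abs_le (v : ℝ≥0) {δ : ℝ} (hδ : 0 < δ) :
    gaussianReal 0 v {x | δ ≤ |x|} ≤ ENNReal.ofReal (v / δ ^ 2) := by
  simpa [integral_id_gaussianReal, variance_id_gaussianReal] using
    meas_ge_le_variance_div_sq (memLp_id_gaussianReal (μ := 0) (v := v) 2) hδ

section GaussianSequence

variable {Ω : Type*} [MeasurableSpace Ω] {μ : Measure Ω} {X : ℕ → Ω → ℝ} {v : ℕ → ℝ≥0}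

lemma tendsto_variance_zero_of_measure_setOf_tendsto_ne_zero [IsFiniteMeasure μ] {m : ℕ → ℝ}
    (hX : ∀ n, HasLaw (X n) (gaussianReal (m n) (v n)) μ) {a : ℝ}
    (ha : μ {ω | Tendsto (X · ω) atTop (𝓝 a)} ≠ 0) : Tendsto v atTop (𝓝 0) := by
  set q := (μ {ω | Tendsto (X · ω) atTop (𝓝 a)}).toReal
  have hq : 0 < q := ENNReal.toReal_pos ha (measure_ne_top _ _)
  refine tendsto_order.2 ⟨fun b hb ↦ absurd hb not_lt_zero, fun C hC ↦ ?_⟩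
  -- chosen so that the density bound `2ε / √(2πC)` of `gaussianReal_closedBall_le` is `q / 2`
  set ε := q * √(2 * π * C) / 4
  have hε : 0 < ε := by positivity
  have hliminf : ENNReal.ofReal q ≤
      liminf (fun n ↦ gaussianReal (m n) (v n) (closedBall a ε)) atTop := by
    calc ENNReal.ofReal q = μ {ω | Tendsto (X · ω) atTop (𝓝 a)} :=
          ENNReal.ofReal_toReal (measure_ne_top _ _)
      _ ≤ μ {ω | ∀ᶠ n in atTop, ω ∈ {ω | X n ω ∈ closedBall a ε}} :=
          measure_mono fun ω hω ↦ hω (closedBall_mem_nhds a hε)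
      _ ≤ _ := measure_setOf_eventually_mem_le_liminf μ _
      _ = _ := by congr with n; exact (hX n).measure_eq measurableSet_closedBall
  by_contra hvC
  have hfreq : ∃ᶠ n in atTop,
      gaussianReal (m n) (v n) (closedBall a ε) ≤ ENNReal.ofReal (q / 2) := by
    refine (not_eventually.1 hvC).mono fun n hn ↦ ?_
    have hvn : C ≤ v n := not_lt.1 hn
    refine (gaussianReal_closedBall_le _ (hC.trans_le hvn).ne' _ _).trans
      (ENNReal.ofReal_le_ofReal ?_)
    calc 2 * ε / √(2 * π * v n) ≤ 2 * ε / √(2 * π * C) := by gcongr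
      _ = q / 2 := by field_simp; ring
  have := hliminf.trans (liminf_le_of_frequently_le' hfreq)
  rw [ENNReal.ofReal_le_ofReal_iff (by positivity)] at this
  linarith

lemma tendstoInMeasure_zero_of_tendsto_variance_zero
    (hX : ∀ n, HasLaw (X n) (gaussianReal 0 (v n)) μ) (hv : Tendsto v atTop (𝓝 0)) :
    TendstoInMeasure μ X atTop 0 := by
  refine tendstoInMeasure_iff_dist.2 fun δ hδ ↦ ?_
  have hbound : Tendsto (fun n ↦ ENNReal.ofReal (v n / δ ^ 2)) atTop (𝓝 0) := by
    simpa using ENNReal.tendsto_ofReal ((NNReal.tendsto_coe.2 hv).div_const (δ ^ 2))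
  refine tendsto_of_tendsto_of_tendsto_of_le_of_le tendsto_const_nhds hbound (fun _ ↦ zero_le)
    fun n ↦ ?_
  have hmeas : MeasurableSet {x : ℝ | δ ≤ |x|} := measurableSet_le measurable_const measurable_abs
  simpa [Real.dist_eq, (hX n).measure_eq hmeas] using gaussianReal_setOf_le_abs_le (v n) hδ

lemma ae_forall_tendsto_imp_eq_of_measure_setOf_tendsto_ne_zero [IsFiniteMeasure μ]
    (hX : ∀ n, HasLaw (X n) (gaussianReal 0 (v n)) μ) {a : ℝ}
    (ha : μ {ω | Tendsto (X · ω) atTop (𝓝 a)} ≠ 0) :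
    ∀ᵐ ω ∂μ, ∀ c, Tendsto (X · ω) atTop (𝓝 c) → c = a := by
  obtain ⟨ns, hns, hsub⟩ := (tendstoInMeasure_zero_of_tendsto_variance_zero hX
    (tendsto_variance_zero_of_measure_setOf_tendsto_ne_zero hX ha)).exists_seq_tendsto_ae
  have hzero : ∀ᵐ ω ∂μ, ∀ c, Tendsto (X · ω) atTop (𝓝 c) → c = 0 :=
    hsub.mono fun ω hω c hc ↦ tendsto_nhds_unique (hc.comp hns.tendsto_atTop) hω
  obtain ⟨ω, hωa, hω0⟩ := nonempty_of_measure_ne_zero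
    ((measure_sdiff_null (ae_iff.1 hzero)).trans_ne ha)
  obtain rfl : a = 0 := not_not.1 hω0 a hωa
  exact hzero

end GaussianSequence

lemma measure_eq_zero_of_ae_ae_restrict_eq_const {α : Type*} [MeasurableSpace α]
    {ν : Measure α} [SigmaFinite ν] [MeasurableSpace (Lp ℝ 2 ν)] {μ : Measure (Lp ℝ 2 ν)}
    [μ.IsOpenPosMeasure] {S : Set α} (hS : MeasurableSet S) {a : ℝ}
    (h : ∀ᵐ f ∂μ, ∀ᵐ z ∂ν.restrict S, f z = a) : ν S = 0 := by
  by_contra hS0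
  obtain ⟨T, hT, hTS, hT0, hTfin⟩ :=
    Measure.exists_subset_measure_lt_top hS (pos_iff_ne_zero.2 hS0)
  set χ := indicatorConstLp 2 hT hTfin.ne (1 : ℝ)
  have hconst : (fun f ↦ inner ℝ χ f) =ᵐ[μ] fun _ ↦ ν.real T * a := by
    filter_upwards [h] with f hf
    rw [L2.inner_indicatorConstLp_one,
      integral_congr_ae (ae_restrict_of_ae_restrict_of_subset hTS hf), setIntegral_const,
      smul_eq_mul]
  have hfun := congrFun <|
    (Continuous.ae_eq_iff_eq μ (continuous_const.inner continuous_id) continuous_const).1 hconst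
  refine ENNReal.toReal_ne_zero.2 ⟨hT0.ne', hTfin.ne⟩ ?_
  calc ν.real T = inner ℝ χ χ := by
        rw [L2.real_inner_indicatorConstLp_one_indicatorConstLp_one hT hT hTfin.ne hTfin.ne,
          Set.inter_self]
    _ = inner ℝ χ 0 := (hfun χ).trans (hfun 0).symm
    _ = 0 := inner_zero_right χ

section BallAverage

variable {E : Type*} [NormedAddCommGroup E] [NormedSpace ℝ E] [FiniteDimensional ℝ E]
  [MeasurableSpace E] [BorelSpace E] (m : Measure E) [m.IsAddHaarMeasure] (D : Set E)

lemma tendsto_measure_closedBall_symmDiff (r : ℝ) (z : E) :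
    Tendsto (fun y ↦ m (closedBall y r ∆ closedBall z r)) (𝓝 z) (𝓝 0) := by
  let τ : C(E, C(E, E)) := ContinuousMap.curry ⟨fun p : E × E ↦ p.2 - p.1, by fun_prop⟩
  have hτ (y : E) : closedBall y r = τ y ⁻¹' closedBall 0 r := by
    ext x
    simp only [Set.mem_preimage, mem_closedBall, dist_eq_norm, sub_zero]
    rfl
  convert tendsto_measure_symmDiff_preimage_nhds_zero (μ := m) (s := closedBall 0 r)
    (τ.continuous.tendsto z) (.of_forall fun y ↦ measurePreserving_sub_right m y)
    (measurePreserving_sub_right m z) measurableSet_closedBall.nullMeasurableSet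
    measure_closedBall_lt_top.ne using 3 with y
  rw [hτ y, hτ z]

noncomputable def ballAverage (r : ℝ) (z : E) : Lp ℝ 2 (m.restrict D) →L[ℝ] ℝ :=
  (m.real (closedBall z r))⁻¹ • innerSL ℝ (indicatorConstLp (μ := m.restrict D) 2
    (measurableSet_closedBall (x := z) (ε := r)) measure_closedBall_lt_top.ne (1 : ℝ))

lemma ballAverage_apply (hD : MeasurableSet D) (r : ℝ) (z : E) (f : Lp ℝ 2 (m.restrict D)) :
    ballAverage m D r z f = ⨍ y in closedBall z r, D.indicator f y ∂m := by
  rw [ballAverage, smul_apply, innerSL_apply_apply, L2.inner_indicatorConstLp_one,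
    setAverage_eq, setIntegral_indicator hD, Measure.restrict_restrict measurableSet_closedBall,
    smul_eq_mul]

lemma continuous_ballAverage (r : ℝ) :
    Continuous fun p : Lp ℝ 2 (m.restrict D) × E ↦ ballAverage m D r p.2 p.1 := by
  have hχ : Continuous fun z : E ↦ indicatorConstLp (μ := m.restrict D) 2
      (measurableSet_closedBall (x := z) (ε := r)) measure_closedBall_lt_top.ne (1 : ℝ) :=
    continuous_indicatorConstLp_set (by norm_num) fun z ↦ ENNReal.tendsto_nhds_zero.2 fun ε hε ↦
      ((ENNReal.tendsto_nhds_zero.1 (tendsto_measure_closedBall_symmDiff m r z) ε hε).mono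
        fun y hy ↦ (Measure.restrict_le_self _).trans hy)
  simp only [ballAverage, smul_apply, innerSL_apply_apply, measureReal_def,
    Measure.addHaar_closedBall_center m, smul_eq_mul]
  exact continuous_const.mul ((hχ.comp continuous_snd).inner (𝕜 := ℝ) continuous_fst)

lemma ae_tendsto_ballAverage (hD : MeasurableSet D) (f : Lp ℝ 2 (m.restrict D)) {r : ℕ → ℝ}
    (hr : Tendsto r atTop (𝓝[>] 0)) :
    ∀ᵐ z ∂m.restrict D, Tendsto (fun n ↦ ballAverage m D (r n) z f) atTop (𝓝 (f z)) := by
  have hf : LocallyIntegrable (D.indicator f) m :=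
    ((memLp_indicator_iff_restrict hD).2 (Lp.memLp f)).locallyIntegrable one_le_two
  filter_upwards [ae_restrict_of_ae (IsUnifLocDoublingMeasure.ae_tendsto_average (μ := m) hf 1),
    ae_restrict_mem hD] with z hz hzD
  have hcentre : ∀ᶠ n in atTop, z ∈ closedBall z (1 * r n) :=
    (hr.eventually self_mem_nhdsWithin).mono fun n hn ↦ by simpa using le_of_lt hn
  simp_rw [ballAverage_apply m D hD, ← Set.indicator_of_mem hzD f]
  exact hz (fun _ ↦ z) r hr hcentre

end BallAverage

theorem IsCenteredGaussian.ae_measure_setOf_eq_eq_zero {α : Type*} [MeasurableSpace α]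
    {ν : Measure α} [SigmaFinite ν] [MeasurableSpace (Lp ℝ 2 ν)] [BorelSpace (Lp ℝ 2 ν)]
    {μ : Measure (Lp ℝ 2 ν)} [IsFiniteMeasure μ] [μ.IsOpenPosMeasure]
    (hμ : IsCenteredGaussian μ) {L : ℕ → α → Lp ℝ 2 ν →L[ℝ] ℝ}
    (hL_meas : ∀ n, Measurable fun p : Lp ℝ 2 ν × α ↦ L n p.2 p.1)
    (hL_lim : ∀ f : Lp ℝ 2 ν, ∀ᵐ z ∂ν, Tendsto (fun n ↦ L n z f) atTop (𝓝 (f z))) (a : ℝ) :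
    ∀ᵐ f ∂μ, ν {z | f z = a} = 0 := by
  have hlaw (z : α) : ∀ n, HasLaw (L n z) (gaussianReal 0 (hμ (L n z)).choose) μ :=
    fun n ↦ ⟨(L n z).continuous.aemeasurable, (hμ (L n z)).choose_spec⟩
  have hE : MeasurableSet {p : Lp ℝ 2 ν × α | Tendsto (fun n ↦ L n p.2 p.1) atTop (𝓝 a)} :=
    measurableSet_tendsto _ hL_meas
  have hConv :
      MeasurableSet {p : Lp ℝ 2 ν × α | ∃ c, Tendsto (fun n ↦ L n p.2 p.1) atTop (𝓝 c)} :=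
    measurableSet_exists_tendsto hL_meas
  set W := {z | μ {f | Tendsto (fun n ↦ L n z f) atTop (𝓝 a)} ≠ 0}
  have hW : MeasurableSet W := measurable_measure_prodMk_right hE (measurableSet_singleton 0).compl
  have hW_lim : ∀ᵐ z ∂ν.restrict W, ∀ᵐ f ∂μ,
      (∃ c, Tendsto (fun n ↦ L n z f) atTop (𝓝 c)) → Tendsto (fun n ↦ L n z f) atTop (𝓝 a) :=
    (ae_restrict_iff' hW).2 <| .of_forall fun z hz ↦
      (ae_forall_tendsto_imp_eq_of_measure_setOf_tendsto_ne_zero (hlaw z) hz).mono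
        fun f hf ⟨c, hc⟩ ↦ hf c hc ▸ hc
  have hW_null : ν W = 0 := by
    refine measure_eq_zero_of_ae_ae_restrict_eq_const (μ := μ) hW (a := a) ?_
    filter_upwards [(Measure.ae_ae_comm (hConv.imp hE)).2 hW_lim] with f hf
    filter_upwards [hf, ae_restrict_of_ae (hL_lim f)] with z himp hlim
    exact tendsto_nhds_unique hlim (himp ⟨_, hlim⟩)
  have hnot : ∀ᵐ z ∂ν, ∀ᵐ f ∂μ, ¬Tendsto (fun n ↦ L n z f) atTop (𝓝 a) :=
    (measure_eq_zero_iff_ae_notMem.1 hW_null).mono fun z hz ↦ ae_iff.2 (by simpa [W] using hz)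
  filter_upwards [(Measure.ae_ae_comm hE.compl).2 hnot] with f hf
  have hne : ∀ᵐ z ∂ν, f z ≠ a := by
    filter_upwards [hf, hL_lim f] with z hna hlim hza
    exact hna (hza ▸ hlim)
  simpa using ae_iff.1 hne

theorem gaussian_level_sets_null_general (d : ℕ) (D : Set (Fin d → ℝ))
    (hDopen : IsOpen D)
    [MeasurableSpace (Lp ℝ 2 (volume.restrict D))]
    [BorelSpace (Lp ℝ 2 (volume.restrict D))]
    (μ : Measure (Lp ℝ 2 (volume.restrict D))) [IsProbabilityMeasure μ]
    (hgauss : IsCenteredGaussian μ)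
    (hnondeg : ∀ U : Set (Lp ℝ 2 (volume.restrict D)), IsOpen U → U.Nonempty → 0 < μ U)
    (a : ℝ) :
    ∀ᵐ h ∂μ, (volume.restrict D : Measure (Fin d → ℝ)) {z : Fin d → ℝ | (h : Lp ℝ 2 (volume.restrict D)) z = a} = 0 := by
  have : μ.IsOpenPosMeasure := ⟨fun U hU hne ↦ (hnondeg U hU hne).ne'⟩
  have hr : Tendsto (fun n : ℕ ↦ ((n : ℝ) + 1)⁻¹) atTop (𝓝[>] 0) :=
    tendsto_inv_atTop_nhdsGT_zero.comp
      (tendsto_atTop_add_const_right _ 1 tendsto_natCast_atTop_atTop)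
  exact hgauss.ae_measure_setOf_eq_eq_zero
    (fun n ↦ (continuous_ballAverage volume D _).measurable)
    (fun f ↦ ae_tendsto_ballAverage volume D hDopen.measurableSet f hr) a

/-- Lemma A.3: if `μ` is a non-degenerate centred Gaussian measure on `H = L²(D)` for a
domain `D ⊆ ℝ^d`, then for every `a ∈ ℝ` the level set `{z ∈ D | h(z) = a}` has Lebesgue
measure zero for `μ`-a.e. `h ∈ H`. -/
theorem gaussian_level_sets_null (d : ℕ) (D : Set (Fin d → ℝ))
    (hDopen : IsOpen D) (hDne : D.Nonempty)
    [MeasurableSpace (Lp ℝ 2 (volume.restrict D))]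
    [BorelSpace (Lp ℝ 2 (volume.restrict D))]
    (μ : Measure (Lp ℝ 2 (volume.restrict D))) [IsProbabilityMeasure μ]
    (hgauss : IsCenteredGaussian μ)
    (hnondeg : ∀ U : Set (Lp ℝ 2 (volume.restrict D)), IsOpen U → U.Nonempty → 0 < μ U)
    (a : ℝ) :
    ∀ᵐ h ∂μ, (volume.restrict D : Measure (Fin d → ℝ)) {z : Fin d → ℝ | (h : Lp ℝ 2 (volume.restrict D)) z = a} = 0 :=
  gaussian_level_sets_null_general d D hDopen μ hgauss hnondeg a
end

section
/- Let H be a Hilbert space, φ, ψ ∈ H with ‖φ‖ = ‖ψ‖ = 1 and φ ≠ ψ, φ ≠ −ψ. Define J : H → H as the identity on the orthogonal complement of span{φ,ψ} and on span{φ,ψ} by J(ψ) = φ and J((φ − ⟨ψ,φ⟩ψ)/√(1−⟨φ,ψ⟩²)) = (⟨φ,ψ⟩φ − ψ)/√(1−⟨φ,ψ⟩²). Then J is an isometric isomorphism and the operator norm satisfies ‖J − id‖² ≤ ‖φ − ψ‖² + 2(1 − ⟨ψ,φ⟩). -/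
/-!
With `a = ⟪φ, ψ⟫` and `e` the unit vector obtained from `φ` by Gram–Schmidt against `ψ`, we have
`φ = a ψ + √(1 - a²) e`, so `J` is the rotation of the plane `span{ψ, e}` with cosine `a` and sine
`√(1 - a²)`. For such a rotation `‖J u - u‖² = (2 - 2a) (⟪ψ, u⟫² + ⟪e, u⟫²)`, which by Bessel's
inequality is at most `(2 - 2a) ‖u‖² = ‖φ - ψ‖² ‖u‖²`.
-/

open RealInnerProductSpace

section PlaneRotation

variable {H : Type*} [NormedAddCommGroup H] [InnerProductSpace ℝ H] {e₁ e₂ : H}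

/-- For orthonormal `e₁, e₂` and `a ^ 2 + s ^ 2 = 1`, the rotation with cosine `a` and sine `s` in
the plane spanned by `e₁, e₂`, fixing its orthogonal complement. -/
noncomputable def planeRotation (e₁ e₂ : H) (a s : ℝ) : H →ₗ[ℝ] H :=
  LinearMap.id + (innerₛₗ ℝ e₁).smulRight ((a - 1) • e₁ + s • e₂)
    + (innerₛₗ ℝ e₂).smulRight ((a - 1) • e₂ - s • e₁)

theorem planeRotation_apply (e₁ e₂ : H) (a s : ℝ) (u : H) :
    planeRotation e₁ e₂ a s u
      = u + ⟪e₁, u⟫ • ((a - 1) • e₁ + s • e₂) + ⟪e₂, u⟫ • ((a - 1) • e₂ - s • e₁) :=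
  rfl

theorem planeRotation_apply_of_inner_eq_zero {u : H} (a s : ℝ)
    (h₁ : ⟪e₁, u⟫ = 0) (h₂ : ⟪e₂, u⟫ = 0) : planeRotation e₁ e₂ a s u = u := by
  simp [planeRotation_apply, h₁, h₂]

theorem planeRotation_apply_left (h₁ : ‖e₁‖ = 1) (h₁₂ : ⟪e₁, e₂⟫ = 0) (a s : ℝ) :
    planeRotation e₁ e₂ a s e₁ = a • e₁ + s • e₂ := by
  rw [planeRotation_apply, real_inner_self_eq_norm_sq, h₁, real_inner_comm, h₁₂]
  module

theorem planeRotation_apply_right (h₂ : ‖e₂‖ = 1) (h₁₂ : ⟪e₁, e₂⟫ = 0) (a s : ℝ) :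
    planeRotation e₁ e₂ a s e₂ = a • e₂ - s • e₁ := by
  rw [planeRotation_apply, real_inner_self_eq_norm_sq, h₂, h₁₂]
  module

theorem planeRotation_neg_apply_planeRotation (h₁ : ‖e₁‖ = 1) (h₂ : ‖e₂‖ = 1)
    (h₁₂ : ⟪e₁, e₂⟫ = 0) {a s : ℝ} (has : a ^ 2 + s ^ 2 = 1) (u : H) :
    planeRotation e₁ e₂ a (-s) (planeRotation e₁ e₂ a s u) = u := by
  simp only [planeRotation_apply, inner_add_right, inner_sub_right, inner_smul_right,
    real_inner_self_eq_norm_sq, h₁, h₂, h₁₂, real_inner_comm e₁ e₂]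
  match_scalars
  · ring
  · linear_combination ⟪e₁, u⟫ * has
  · linear_combination ⟪e₂, u⟫ * has

theorem norm_planeRotation_sub_sq (h₁ : ‖e₁‖ = 1) (h₂ : ‖e₂‖ = 1)
    (h₁₂ : ⟪e₁, e₂⟫ = 0) {a s : ℝ} (has : a ^ 2 + s ^ 2 = 1) (u : H) :
    ‖planeRotation e₁ e₂ a s u - u‖ ^ 2 = (2 - 2 * a) * (⟪e₁, u⟫ ^ 2 + ⟪e₂, u⟫ ^ 2) := by
  rw [← real_inner_self_eq_norm_sq, planeRotation_apply, add_sub_right_comm, add_sub_cancel_left]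
  simp only [inner_add_left, inner_add_right, inner_sub_left, inner_sub_right, inner_smul_left,
    inner_smul_right, real_inner_self_eq_norm_sq, h₁, h₂, h₁₂, real_inner_comm e₁ e₂, conj_trivial]
  linear_combination (⟪e₁, u⟫ ^ 2 + ⟪e₂, u⟫ ^ 2) * has

theorem norm_planeRotation (h₁ : ‖e₁‖ = 1) (h₂ : ‖e₂‖ = 1)
    (h₁₂ : ⟪e₁, e₂⟫ = 0) {a s : ℝ} (has : a ^ 2 + s ^ 2 = 1) (u : H) :
    ‖planeRotation e₁ e₂ a s u‖ = ‖u‖ := by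
  refine (sq_eq_sq₀ (norm_nonneg _) (norm_nonneg _)).1 ?_
  rw [← real_inner_self_eq_norm_sq, planeRotation_apply]
  simp only [inner_add_left, inner_add_right, inner_sub_left, inner_sub_right, inner_smul_left,
    inner_smul_right, real_inner_self_eq_norm_sq, h₁, h₂, h₁₂, real_inner_comm e₁ e₂,
    real_inner_comm e₁ u, real_inner_comm e₂ u, conj_trivial]
  linear_combination (⟪e₁, u⟫ ^ 2 + ⟪e₂, u⟫ ^ 2) * has

theorem inner_sq_add_inner_sq_le_norm_sq (h₁ : ‖e₁‖ = 1) (h₂ : ‖e₂‖ = 1)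
    (h₁₂ : ⟪e₁, e₂⟫ = 0) (u : H) : ⟪e₁, u⟫ ^ 2 + ⟪e₂, u⟫ ^ 2 ≤ ‖u‖ ^ 2 := by
  have hv : Orthonormal ℝ ![e₁, e₂] := by
    rw [orthonormal_iff_ite]
    simp [Fin.forall_fin_two, h₁, h₂, h₁₂, real_inner_comm e₁ e₂]
  simpa [Fin.sum_univ_two] using hv.sum_inner_products_le (s := Finset.univ) u

theorem norm_planeRotation_sub_sq_le (h₁ : ‖e₁‖ = 1) (h₂ : ‖e₂‖ = 1)
    (h₁₂ : ⟪e₁, e₂⟫ = 0) {a s : ℝ} (has : a ^ 2 + s ^ 2 = 1) (u : H) :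
    ‖planeRotation e₁ e₂ a s u - u‖ ^ 2 ≤ (2 - 2 * a) * ‖u‖ ^ 2 := by
  have ha : a ≤ 1 := by nlinarith
  rw [norm_planeRotation_sub_sq h₁ h₂ h₁₂ has]
  gcongr
  · linarith
  · exact inner_sq_add_inner_sq_le_norm_sq h₁ h₂ h₁₂ u

noncomputable def planeRotationEquiv (h₁ : ‖e₁‖ = 1) (h₂ : ‖e₂‖ = 1) (h₁₂ : ⟪e₁, e₂⟫ = 0)
    {a s : ℝ} (has : a ^ 2 + s ^ 2 = 1) : H ≃ₗᵢ[ℝ] H where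
  __ := planeRotation e₁ e₂ a s
  invFun := planeRotation e₁ e₂ a (-s)
  left_inv := planeRotation_neg_apply_planeRotation h₁ h₂ h₁₂ has
  right_inv u := by
    simpa using planeRotation_neg_apply_planeRotation h₁ h₂ h₁₂ (s := -s) (by simpa) u
  norm_map' := norm_planeRotation h₁ h₂ h₁₂ has

theorem planeRotationEquiv_apply (h₁ : ‖e₁‖ = 1) (h₂ : ‖e₂‖ = 1) (h₁₂ : ⟪e₁, e₂⟫ = 0)
    {a s : ℝ} (has : a ^ 2 + s ^ 2 = 1) (u : H) :
    planeRotationEquiv h₁ h₂ h₁₂ has u = planeRotation e₁ e₂ a s u :=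
  rfl

end PlaneRotation

section NormalizedRejection

variable {H : Type*} [NormedAddCommGroup H] [InnerProductSpace ℝ H] {φ ψ : H}

theorem sq_real_inner_lt_one_of_norm_eq_one (hφ : ‖φ‖ = 1) (hψ : ‖ψ‖ = 1) (hne : φ ≠ ψ)
    (hne' : φ ≠ -ψ) : ⟪φ, ψ⟫ ^ 2 < 1 := by
  have hle : |⟪φ, ψ⟫| ≤ 1 := by simpa [hφ, hψ] using abs_real_inner_le_norm φ ψ
  refine sq_lt_one_iff_abs_lt_one _ |>.2 (hle.lt_of_ne fun h => ?_)
  rcases abs_eq (zero_le_one' ℝ) |>.1 h with h | h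
  · exact hne ((inner_eq_one_iff_of_norm_eq_one hφ hψ).1 h)
  · exact hne' ((inner_eq_neg_one_iff_of_norm_eq_one hφ hψ).1 h)

theorem norm_sub_inner_smul_of_norm_eq_one (hφ : ‖φ‖ = 1) (hψ : ‖ψ‖ = 1) :
    ‖φ - ⟪φ, ψ⟫ • ψ‖ = √(1 - ⟪φ, ψ⟫ ^ 2) := by
  have hsq : ‖φ - ⟪φ, ψ⟫ • ψ‖ ^ 2 = 1 - ⟪φ, ψ⟫ ^ 2 := by
    rw [norm_sub_sq_real, norm_smul, inner_smul_right, hφ, hψ, Real.norm_eq_abs, mul_one, sq_abs]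
    ring
  rw [← hsq, Real.sqrt_sq (norm_nonneg _)]

noncomputable def normalizedRejection (φ ψ : H) : H :=
  (√(1 - ⟪φ, ψ⟫ ^ 2))⁻¹ • (φ - ⟪φ, ψ⟫ • ψ)

theorem inner_normalizedRejection (hψ : ‖ψ‖ = 1) : ⟪ψ, normalizedRejection φ ψ⟫ = 0 := by
  simp [normalizedRejection, inner_sub_right, inner_smul_right, real_inner_comm ψ φ, hψ]

theorem norm_normalizedRejection (hφ : ‖φ‖ = 1) (hψ : ‖ψ‖ = 1) (h : ⟪φ, ψ⟫ ^ 2 < 1) :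
    ‖normalizedRejection φ ψ‖ = 1 := by
  rw [normalizedRejection, ← norm_sub_inner_smul_of_norm_eq_one hφ hψ]
  refine norm_smul_inv_norm (norm_pos_iff.1 ?_)
  rw [norm_sub_inner_smul_of_norm_eq_one hφ hψ]
  exact Real.sqrt_pos.2 (by linarith)

theorem inner_smul_add_smul_normalizedRejection (h : ⟪φ, ψ⟫ ^ 2 < 1) :
    ⟪φ, ψ⟫ • ψ + √(1 - ⟪φ, ψ⟫ ^ 2) • normalizedRejection φ ψ = φ := by
  have : √(1 - ⟪φ, ψ⟫ ^ 2) ≠ 0 := (Real.sqrt_pos.2 (by linarith)).ne'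
  rw [normalizedRejection, smul_inv_smul₀ this]
  abel

end NormalizedRejection

/-- Remark 4.1: there exists a rotation `J` of a Hilbert space mapping `ψ` to `φ`, acting
as described on `span{φ,ψ}` and as the identity on its orthogonal complement, with
`‖J − id‖² ≤ ‖φ − ψ‖² + 2(1 − ⟨ψ,φ⟩)`. -/
theorem rotation_close_to_identity
    {H : Type*} [NormedAddCommGroup H] [InnerProductSpace ℝ H]
    (φ ψ : H) (hφ : ‖φ‖ = 1) (hψ : ‖ψ‖ = 1) (hne : φ ≠ ψ) (hne' : φ ≠ -ψ) :
    ∃ J : H ≃ₗᵢ[ℝ] H,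
      J ψ = φ ∧
      J ((Real.sqrt (1 - ⟪φ, ψ⟫ ^ 2))⁻¹ • (φ - ⟪ψ, φ⟫ • ψ)) =
        (Real.sqrt (1 - ⟪φ, ψ⟫ ^ 2))⁻¹ • (⟪φ, ψ⟫ • φ - ψ) ∧
      (∀ u : H, ⟪u, φ⟫ = 0 → ⟪u, ψ⟫ = 0 → J u = u) ∧
      ∀ u : H, ‖J u - u‖ ^ 2 ≤ (‖φ - ψ‖ ^ 2 + 2 * (1 - ⟪ψ, φ⟫)) * ‖u‖ ^ 2 := by
  rw [real_inner_comm φ ψ, ← normalizedRejection]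
  have hlt := sq_real_inner_lt_one_of_norm_eq_one hφ hψ hne hne'
  have hψe := inner_normalizedRejection (φ := φ) hψ
  have he := norm_normalizedRejection hφ hψ hlt
  have hdecomp := inner_smul_add_smul_normalizedRejection hlt
  set a := ⟪φ, ψ⟫
  set s := √(1 - a ^ 2)
  set e := normalizedRejection φ ψ
  have hs : s ≠ 0 := (Real.sqrt_pos.2 (by linarith)).ne'
  have has : a ^ 2 + s ^ 2 = 1 := by rw [Real.sq_sqrt (by linarith)]; ring
  refine ⟨planeRotationEquiv hψ he hψe has, ?_, ?_, fun u hφu hψu => ?_, fun u => ?_⟩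
  · rw [planeRotationEquiv_apply, planeRotation_apply_left hψ hψe, hdecomp]
  · rw [planeRotationEquiv_apply, planeRotation_apply_right he hψe, ← hdecomp]
    match_scalars
    · field_simp
    · field_simp
      linear_combination -has
  · refine planeRotation_apply_of_inner_eq_zero a s (by rwa [real_inner_comm]) ?_
    rw [real_inner_comm]
    simp [e, normalizedRejection, inner_smul_right, inner_sub_right, hφu, hψu]
  · rw [planeRotationEquiv_apply]
    refine (norm_planeRotation_sub_sq_le hψ he hψe has u).trans ?_
    rw [norm_sub_sq_real, hφ, hψ]
    gcongr
    nlinarith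
end

section
/- Let D ⊂ ℝ^d be bounded open with exhausting sets D_N as above, G_N = N D_N ∩ ℤ^d, and Ξ satisfying the partition-of-unity condition. Then for all f, g ∈ C(cl D), lim_{N→∞} N^d ∑_{p∈G_N} ⟨Ξ(N·−p), f⟩_{L²(D)} ⟨Ξ(N·−p), g⟩_{L²(D)} = ⟨f, g⟩_{L²(D)}. -/
/-!
Write `Φ_{N,p} = Ξ(N·−p)`. The Riemann sum equals `∫_D (Q_N f) g` for the quasi-interpolant
`Q_N f = N^d ∑_{p ∈ G_N} ⟨Φ_{N,p}, f⟩ Φ_{N,p}`. Since `N^d ∫ Φ_{N,p} = 1` and `∑_p Φ_{N,p} ≤ 1`,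
`|Q_N f| ≤ sup_D |f|`. If `z ∈ D` lies in some `D_M`, then for large `N` every `p` with
`Φ_{N,p}(z) ≠ 0` belongs to `G_N` and `Φ_{N,p}` is supported in `D ∩ B(z, 2/N)`; the partition of
unity then writes `Q_N f(z) − f(z)` as an average of oscillations of `f` on `B(z, 2/N)`, which tend
to `0` by continuity. Dominated convergence concludes, as `D_N` exhausts `D` up to a null set.
-/

open MeasureTheory Filter Topology Metric Set

lemma closedBall_zero_eq_Icc_pi {ι : Type*} [Fintype ι] {r : ℝ} (hr : 0 ≤ r) :
    closedBall (0 : ι → ℝ) r = Icc (fun _ => -r) (fun _ => r) := by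
  rw [closedBall_pi _ hr, ← pi_univ_Icc]
  simp only [Pi.zero_apply, Real.closedBall_zero_eq_Icc]

lemma exists_pos_norm_le_of_continuousOn_closure {E F : Type*} [PseudoMetricSpace E]
    [ProperSpace E] [SeminormedAddCommGroup F] {D : Set E} (hD : Bornology.IsBounded D)
    {f : E → F} (hf : ContinuousOn f (closure D)) : ∃ C > 0, ∀ y ∈ D, ‖f y‖ ≤ C := by
  obtain ⟨C, hC0, hC⟩ :=
    (hD.isCompact_closure.image_of_continuousOn hf).isBounded.exists_pos_norm_le
  exact ⟨C, hC0, fun y hy => hC _ (mem_image_of_mem f (subset_closure hy))⟩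

section

variable {d : ℕ} {Ξ : (Fin d → ℝ) → ℝ}

def scaledBump (Ξ : (Fin d → ℝ) → ℝ) (N : ℝ) (p : Fin d → ℤ) (y : Fin d → ℝ) : ℝ :=
  Ξ (N • y - fun i => (p i : ℝ))

noncomputable def quasiInterpolant (Ξ : (Fin d → ℝ) → ℝ) (D : Set (Fin d → ℝ))
    (G : Finset (Fin d → ℤ)) (N : ℝ) (f : (Fin d → ℝ) → ℝ) (z : Fin d → ℝ) : ℝ :=
  N ^ d * ∑ p ∈ G, (∫ y in D, scaledBump Ξ N p y * f y) * scaledBump Ξ N p z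

lemma scaledBump_nonneg (h0 : ∀ z, 0 ≤ Ξ z) (N : ℝ) (p : Fin d → ℤ) (y : Fin d → ℝ) :
    0 ≤ scaledBump Ξ N p y :=
  h0 _

lemma integrable_scaledBump (hΞ : Integrable Ξ) {N : ℝ} (hN : N ≠ 0) (p : Fin d → ℤ) :
    Integrable (scaledBump Ξ N p) :=
  (integrable_comp_smul_iff volume (fun x => Ξ (x - fun i => (p i : ℝ))) hN).2
    (hΞ.comp_sub_right _)

lemma integral_scaledBump {N : ℝ} (hN : 0 < N) (p : Fin d → ℤ) :
    ∫ y, scaledBump Ξ N p y = (N ^ d)⁻¹ * ∫ z, Ξ z := by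
  simp only [scaledBump]
  rw [Measure.integral_comp_smul volume (fun x => Ξ (x - fun i => (p i : ℝ))),
    integral_sub_right_eq_self, Module.finrank_fin_fun, smul_eq_mul,
    abs_of_pos (by positivity)]

lemma dist_le_of_scaledBump_ne_zero (hsupp : Function.support Ξ ⊆ closedBall 0 1) {N : ℝ}
    (hN : 0 < N) {p : Fin d → ℤ} {y : Fin d → ℝ} (hy : scaledBump Ξ N p y ≠ 0) :
    dist y (fun i => (p i : ℝ) / N) ≤ N⁻¹ := by
  have hball : ‖N • y - fun i => (p i : ℝ)‖ ≤ 1 := mem_closedBall_zero_iff.1 (hsupp hy)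
  have hrescale : y - (fun i => (p i : ℝ) / N) = N⁻¹ • (N • y - fun i => (p i : ℝ)) := by
    ext i
    simp only [Pi.sub_apply, Pi.smul_apply, smul_eq_mul]
    field_simp
  rw [dist_eq_norm, hrescale, norm_smul, Real.norm_of_nonneg (inv_nonneg.2 hN.le)]
  exact mul_le_of_le_one_right (inv_nonneg.2 hN.le) hball

lemma dist_le_of_scaledBump_ne_zero_of_ne_zero (hsupp : Function.support Ξ ⊆ closedBall 0 1)
    {N : ℝ} (hN : 0 < N) {p : Fin d → ℤ} {y z : Fin d → ℝ} (hy : scaledBump Ξ N p y ≠ 0)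
    (hz : scaledBump Ξ N p z ≠ 0) : dist y z ≤ 2 * N⁻¹ := by
  calc dist y z ≤ dist y (fun i => (p i : ℝ) / N) + dist z (fun i => (p i : ℝ) / N) :=
        dist_triangle_right _ _ _
    _ ≤ N⁻¹ + N⁻¹ := add_le_add (dist_le_of_scaledBump_ne_zero hsupp hN hy)
        (dist_le_of_scaledBump_ne_zero hsupp hN hz)
    _ = 2 * N⁻¹ := by ring

lemma sum_scaledBump_le_one (h0 : ∀ z, 0 ≤ Ξ z)
    (hpart : ∀ z, ∑' k : Fin d → ℤ, Ξ (z - fun i => (k i : ℝ)) = 1)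
    (G : Finset (Fin d → ℤ)) (N : ℝ) (z : Fin d → ℝ) : ∑ p ∈ G, scaledBump Ξ N p z ≤ 1 := by
  have hs : Summable fun k : Fin d → ℤ => Ξ (N • z - fun i => (k i : ℝ)) := by
    by_contra h
    exact zero_ne_one ((tsum_eq_zero_of_not_summable h).symm.trans (hpart (N • z)))
  exact (hs.sum_le_tsum G fun k _ => h0 _).trans_eq (hpart _)

lemma sum_scaledBump_eq_one (hpart : ∀ z, ∑' k : Fin d → ℤ, Ξ (z - fun i => (k i : ℝ)) = 1)
    {G : Finset (Fin d → ℤ)} {N : ℝ} {z : Fin d → ℝ}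
    (hG : ∀ p, scaledBump Ξ N p z ≠ 0 → p ∈ G) : ∑ p ∈ G, scaledBump Ξ N p z = 1 := by
  rw [← hpart (N • z)]
  exact (tsum_eq_sum fun p hp => not_not.1 (mt (hG p) hp)).symm

lemma integrableOn_scaledBump_mul (hΞ : Integrable Ξ) {N : ℝ} (hN : N ≠ 0) (p : Fin d → ℤ)
    {D : Set (Fin d → ℝ)} (hD : MeasurableSet D) {f : (Fin d → ℝ) → ℝ}
    (hfm : AEStronglyMeasurable f (volume.restrict D)) {C : ℝ} (hC : ∀ y ∈ D, ‖f y‖ ≤ C) :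
    IntegrableOn (fun y => scaledBump Ξ N p y * f y) D :=
  (integrable_scaledBump hΞ hN p).integrableOn.mul_bdd hfm
    ((ae_restrict_iff' hD).2 (ae_of_all _ hC))

lemma norm_setIntegral_scaledBump_mul_le (h0 : ∀ z, 0 ≤ Ξ z) (hΞ : Integrable Ξ)
    (hint : ∫ z, Ξ z = 1) {N : ℝ} (hN : 0 < N) (p : Fin d → ℤ) {D : Set (Fin d → ℝ)}
    (hD : MeasurableSet D) {f : (Fin d → ℝ) → ℝ} {C : ℝ} (hC0 : 0 ≤ C)
    (hC : ∀ y ∈ D, ‖f y‖ ≤ C) :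
    ‖∫ y in D, scaledBump Ξ N p y * f y‖ ≤ C * (N ^ d)⁻¹ := by
  have hΦ := integrable_scaledBump hΞ hN.ne' p
  calc ‖∫ y in D, scaledBump Ξ N p y * f y‖ ≤ ∫ y in D, C * scaledBump Ξ N p y := by
        refine norm_integral_le_of_norm_le (hΦ.integrableOn.const_mul C)
          ((ae_restrict_iff' hD).2 (ae_of_all _ fun y hy => ?_))
        rw [norm_mul, Real.norm_of_nonneg (scaledBump_nonneg h0 N p y), mul_comm]
        exact mul_le_mul_of_nonneg_right (hC y hy) (scaledBump_nonneg h0 N p y)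
    _ = C * ∫ y in D, scaledBump Ξ N p y := integral_const_mul _ _
    _ ≤ C * ∫ y, scaledBump Ξ N p y :=
        mul_le_mul_of_nonneg_left (setIntegral_le_integral hΦ (ae_of_all _ fun _ => h0 _)) hC0
    _ = C * (N ^ d)⁻¹ := by rw [integral_scaledBump hN, hint, mul_one]

lemma integrable_quasiInterpolant (hΞ : Integrable Ξ) (D : Set (Fin d → ℝ))
    (G : Finset (Fin d → ℤ)) {N : ℝ} (hN : N ≠ 0) (f : (Fin d → ℝ) → ℝ) :
    Integrable (quasiInterpolant Ξ D G N f) :=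
  (integrable_finsetSum _ fun p _ => (integrable_scaledBump hΞ hN p).const_mul _).const_mul _

lemma setIntegral_quasiInterpolant_mul {D : Set (Fin d → ℝ)} {G : Finset (Fin d → ℤ)} {N : ℝ}
    (f : (Fin d → ℝ) → ℝ) {g : (Fin d → ℝ) → ℝ}
    (hg : ∀ p ∈ G, IntegrableOn (fun z => scaledBump Ξ N p z * g z) D) :
    ∫ z in D, quasiInterpolant Ξ D G N f z * g z =
      N ^ d * ∑ p ∈ G, (∫ z in D, scaledBump Ξ N p z * f z) *
        ∫ z in D, scaledBump Ξ N p z * g z := by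
  simp_rw [quasiInterpolant, mul_assoc, Finset.sum_mul, mul_assoc]
  rw [integral_const_mul, integral_finsetSum _ fun p hp => (hg p hp).const_mul _]
  simp_rw [integral_const_mul]

lemma norm_quasiInterpolant_le (h0 : ∀ z, 0 ≤ Ξ z) (hΞ : Integrable Ξ) (hint : ∫ z, Ξ z = 1)
    (hpart : ∀ z, ∑' k : Fin d → ℤ, Ξ (z - fun i => (k i : ℝ)) = 1) {N : ℝ} (hN : 0 < N)
    {D : Set (Fin d → ℝ)} (hD : MeasurableSet D) (G : Finset (Fin d → ℤ))
    {f : (Fin d → ℝ) → ℝ} {C : ℝ} (hC0 : 0 ≤ C) (hC : ∀ y ∈ D, ‖f y‖ ≤ C) (z : Fin d → ℝ) :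
    ‖quasiInterpolant Ξ D G N f z‖ ≤ C := by
  have hNd : 0 < N ^ d := by positivity
  calc ‖quasiInterpolant Ξ D G N f z‖
      ≤ N ^ d * ∑ p ∈ G, C * (N ^ d)⁻¹ * scaledBump Ξ N p z := by
        rw [quasiInterpolant, norm_mul, Real.norm_of_nonneg hNd.le]
        refine mul_le_mul_of_nonneg_left ((norm_sum_le _ _).trans
          (Finset.sum_le_sum fun p _ => ?_)) hNd.le
        rw [norm_mul, Real.norm_of_nonneg (scaledBump_nonneg h0 N p z)]
        exact mul_le_mul_of_nonneg_right
          (norm_setIntegral_scaledBump_mul_le h0 hΞ hint hN p hD hC0 hC)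
          (scaledBump_nonneg h0 N p z)
    _ = C * ∑ p ∈ G, scaledBump Ξ N p z := by
        simp_rw [mul_assoc, ← Finset.mul_sum]
        field_simp
    _ ≤ C := mul_le_of_le_one_right hC0 (sum_scaledBump_le_one h0 hpart G N z)

lemma norm_pow_mul_setIntegral_scaledBump_mul_sub_le (h0 : ∀ z, 0 ≤ Ξ z) (hΞ : Integrable Ξ)
    (hint : ∫ z, Ξ z = 1) (hsupp : Function.support Ξ ⊆ closedBall 0 1) {N : ℝ} (hN : 0 < N)
    {p : Fin d → ℤ} {D : Set (Fin d → ℝ)} {f : (Fin d → ℝ) → ℝ}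
    (hfi : IntegrableOn (fun y => scaledBump Ξ N p y * f y) D) {z : Fin d → ℝ} {ε : ℝ}
    (hz : scaledBump Ξ N p z ≠ 0)
    (hloc : ∀ y ∈ closedBall z (2 * N⁻¹), y ∈ D ∧ dist (f y) (f z) ≤ ε) :
    ‖N ^ d * (∫ y in D, scaledBump Ξ N p y * f y) - f z‖ ≤ ε := by
  have hNd : 0 < N ^ d := by positivity
  have hΦ := integrable_scaledBump hΞ hN.ne' p
  have hnear : ∀ y, scaledBump Ξ N p y ≠ 0 → y ∈ closedBall z (2 * N⁻¹) := fun y hy =>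
    mem_closedBall.2 (dist_le_of_scaledBump_ne_zero_of_ne_zero hsupp hN hy hz)
  have hmass : ∫ y in D, scaledBump Ξ N p y = (N ^ d)⁻¹ := by
    rw [setIntegral_eq_integral_of_forall_compl_eq_zero fun y hyD => by_contra fun hy =>
      hyD (hloc y (hnear y hy)).1, integral_scaledBump hN, hint, mul_one]
  have hosc : ‖∫ y in D, scaledBump Ξ N p y * (f y - f z)‖ ≤ ε * (N ^ d)⁻¹ := by
    rw [← hmass, ← integral_const_mul]
    refine norm_integral_le_of_norm_le (hΦ.integrableOn.const_mul ε) (ae_of_all _ fun y => ?_)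
    by_cases hy : scaledBump Ξ N p y = 0
    · simp [hy]
    rw [norm_mul, Real.norm_of_nonneg (scaledBump_nonneg h0 N p y), ← dist_eq_norm, mul_comm]
    exact mul_le_mul_of_nonneg_right (hloc y (hnear y hy)).2 (scaledBump_nonneg h0 N p y)
  have hsplit : N ^ d * (∫ y in D, scaledBump Ξ N p y * f y) - f z =
      N ^ d * ∫ y in D, scaledBump Ξ N p y * (f y - f z) := by
    simp_rw [mul_sub]
    rw [integral_sub hfi (hΦ.integrableOn.mul_const _), integral_mul_const, hmass]
    field_simp
  rw [hsplit, norm_mul, Real.norm_of_nonneg hNd.le]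
  calc N ^ d * ‖∫ y in D, scaledBump Ξ N p y * (f y - f z)‖ ≤ N ^ d * (ε * (N ^ d)⁻¹) :=
        mul_le_mul_of_nonneg_left hosc hNd.le
    _ = ε := by field_simp

lemma norm_quasiInterpolant_sub_le (h0 : ∀ z, 0 ≤ Ξ z) (hΞ : Integrable Ξ)
    (hint : ∫ z, Ξ z = 1) (hsupp : Function.support Ξ ⊆ closedBall 0 1)
    (hpart : ∀ z, ∑' k : Fin d → ℤ, Ξ (z - fun i => (k i : ℝ)) = 1) {N : ℝ} (hN : 0 < N)
    {D : Set (Fin d → ℝ)} {G : Finset (Fin d → ℤ)} {f : (Fin d → ℝ) → ℝ}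
    (hfi : ∀ p ∈ G, IntegrableOn (fun y => scaledBump Ξ N p y * f y) D) {z : Fin d → ℝ} {ε : ℝ}
    (hG : ∀ p, scaledBump Ξ N p z ≠ 0 → p ∈ G)
    (hloc : ∀ y ∈ closedBall z (2 * N⁻¹), y ∈ D ∧ dist (f y) (f z) ≤ ε) :
    ‖quasiInterpolant Ξ D G N f z - f z‖ ≤ ε := by
  have hsum := sum_scaledBump_eq_one hpart hG
  have hrw : quasiInterpolant Ξ D G N f z - f z = ∑ p ∈ G,
      scaledBump Ξ N p z * (N ^ d * (∫ y in D, scaledBump Ξ N p y * f y) - f z) := by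
    simp_rw [mul_sub, Finset.sum_sub_distrib, ← Finset.sum_mul, hsum, one_mul, quasiInterpolant,
      Finset.mul_sum]
    congr 1
    exact Finset.sum_congr rfl fun p _ => by ring
  calc ‖quasiInterpolant Ξ D G N f z - f z‖ ≤ ∑ p ∈ G, scaledBump Ξ N p z * ε := by
        rw [hrw]
        refine (norm_sum_le _ _).trans (Finset.sum_le_sum fun p hp => ?_)
        rw [norm_mul, Real.norm_of_nonneg (scaledBump_nonneg h0 N p z)]
        by_cases hz : scaledBump Ξ N p z = 0
        · simp [hz]
        exact mul_le_mul_of_nonneg_left (norm_pow_mul_setIntegral_scaledBump_mul_sub_le h0 hΞ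
          hint hsupp hN (hfi p hp) hz hloc) (scaledBump_nonneg h0 N p z)
    _ = ε := by rw [← Finset.sum_mul, hsum, one_mul]

lemma tendsto_quasiInterpolant (h0 : ∀ z, 0 ≤ Ξ z) (hΞ : Integrable Ξ) (hint : ∫ z, Ξ z = 1)
    (hsupp : Function.support Ξ ⊆ closedBall 0 1)
    (hpart : ∀ z, ∑' k : Fin d → ℤ, Ξ (z - fun i => (k i : ℝ)) = 1) {D : Set (Fin d → ℝ)}
    (hD : IsOpen D) {f : (Fin d → ℝ) → ℝ} (hfm : AEStronglyMeasurable f (volume.restrict D))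
    {C : ℝ} (hC : ∀ y ∈ D, ‖f y‖ ≤ C) {G : ℕ → Finset (Fin d → ℤ)} {z : Fin d → ℝ}
    (hz : z ∈ D) (hf : ContinuousAt f z)
    (hG : ∃ V ∈ 𝓝 z, ∀ᶠ N : ℕ in atTop, ∀ p, (fun i => (p i : ℝ) / N) ∈ V → p ∈ G N) :
    Tendsto (fun N : ℕ => quasiInterpolant Ξ D (G N) N f z) atTop (𝓝 (f z)) := by
  obtain ⟨V, hV, hGV⟩ := hG
  refine Metric.tendsto_nhds.2 fun ε hε => ?_
  have hnear : ∀ᶠ y in 𝓝 z, y ∈ V ∧ y ∈ D ∧ dist (f y) (f z) ≤ ε / 2 :=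
    (eventually_mem_set.2 hV).and ((hD.eventually_mem hz).and
      (hf.eventually (closedBall_mem_nhds _ (half_pos hε))))
  have hradius : Tendsto (fun N : ℕ => 2 * (N : ℝ)⁻¹) atTop (𝓝 0) := by
    simpa using tendsto_inv_atTop_nhds_zero_nat.const_mul (2 : ℝ)
  have hballs : ∀ᶠ N : ℕ in atTop, ∀ y ∈ closedBall z (2 * (N : ℝ)⁻¹),
      y ∈ V ∧ y ∈ D ∧ dist (f y) (f z) ≤ ε / 2 :=
    ((tendsto_closedBall_smallSets z).comp hradius).eventually
      (eventually_smallSets_forall.2 hnear)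
  filter_upwards [hballs, hGV, eventually_gt_atTop 0] with N hball hGN hN
  have hN' : (0 : ℝ) < N := Nat.cast_pos.2 hN
  have hG' : ∀ p, scaledBump Ξ N p z ≠ 0 → p ∈ G N := by
    intro p hp
    have hdist : dist z (fun i => (p i : ℝ) / N) ≤ 2 * (N : ℝ)⁻¹ := by
      linarith [dist_le_of_scaledBump_ne_zero hsupp hN' hp, inv_pos.2 hN']
    exact hGN p (hball _ (mem_closedBall_comm.1 hdist)).1
  rw [dist_eq_norm]
  exact (norm_quasiInterpolant_sub_le h0 hΞ hint hsupp hpart hN'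
    (fun p _ => integrableOn_scaledBump_mul hΞ hN'.ne' p hD.measurableSet hfm hC) hG'
    fun y hy => (hball y hy).2).trans_lt (half_lt_self hε)

lemma ae_tendsto_quasiInterpolant (h0 : ∀ z, 0 ≤ Ξ z) (hΞ : Integrable Ξ)
    (hint : ∫ z, Ξ z = 1) (hsupp : Function.support Ξ ⊆ closedBall 0 1)
    (hpart : ∀ z, ∑' k : Fin d → ℤ, Ξ (z - fun i => (k i : ℝ)) = 1) {D : Set (Fin d → ℝ)}
    (hD : IsOpen D) {f : (Fin d → ℝ) → ℝ} (hf : ContinuousOn f (closure D))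
    {C : ℝ} (hC : ∀ y ∈ D, ‖f y‖ ≤ C)
    {DN : ℕ → Set (Fin d → ℝ)} (hmono : Monotone DN)
    (hDNopen : ∀ N, ∃ U : Set (Fin d → ℝ), IsOpen U ∧ DN N = U ∩ closure D)
    (hcover : volume (closure D \ ⋃ N, DN N) = 0) {G : ℕ → Finset (Fin d → ℤ)}
    (hG : ∀ N (p : Fin d → ℤ), p ∈ G N ↔ (fun i => (p i : ℝ) / (N : ℝ)) ∈ DN N) :
    ∀ᵐ z ∂volume.restrict D,
      Tendsto (fun N : ℕ => quasiInterpolant Ξ D (G N) N f z) atTop (𝓝 (f z)) := by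
  have hnull : volume.restrict D (⋃ N, DN N)ᶜ = 0 := by
    rw [Measure.restrict_apply' hD.measurableSet]
    refine measure_mono_null ?_ hcover
    exact fun z hz => ⟨subset_closure hz.2, hz.1⟩
  filter_upwards [ae_restrict_mem hD.measurableSet, measure_eq_zero_iff_ae_notMem.1 hnull]
    with z hz hzN
  have hclosure : closure D ∈ 𝓝 z := mem_of_superset (hD.mem_nhds hz) subset_closure
  obtain ⟨M, hM⟩ := mem_iUnion.1 (not_not.1 hzN)
  obtain ⟨U, hU, hUM⟩ := hDNopen M
  refine tendsto_quasiInterpolant h0 hΞ hint hsupp hpart hD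
    ((hf.mono subset_closure).aestronglyMeasurable hD.measurableSet) hC hz
    (hf.continuousAt hclosure)
    ⟨DN M, hUM ▸ inter_mem (hU.mem_nhds (hUM ▸ hM).1) hclosure, ?_⟩
  filter_upwards [eventually_ge_atTop M] with N hN p hp
  exact (hG N p).2 (hmono hN hp)

lemma tendsto_setIntegral_quasiInterpolant_mul (h0 : ∀ z, 0 ≤ Ξ z) (hΞ : Integrable Ξ)
    (hint : ∫ z, Ξ z = 1) (hpart : ∀ z, ∑' k : Fin d → ℤ, Ξ (z - fun i => (k i : ℝ)) = 1)
    {D : Set (Fin d → ℝ)} (hD : MeasurableSet D) (hDfin : volume D ≠ ⊤)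
    {G : ℕ → Finset (Fin d → ℤ)} {f g : (Fin d → ℝ) → ℝ} {Cf Cg : ℝ} (hCf0 : 0 ≤ Cf)
    (hCf : ∀ y ∈ D, ‖f y‖ ≤ Cf) (hgm : AEStronglyMeasurable g (volume.restrict D))
    (hCg : ∀ y ∈ D, ‖g y‖ ≤ Cg)
    (hlim : ∀ᵐ z ∂volume.restrict D,
      Tendsto (fun N : ℕ => quasiInterpolant Ξ D (G N) N f z) atTop (𝓝 (f z))) :
    Tendsto (fun N : ℕ => ∫ z in D, quasiInterpolant Ξ D (G N) N f z * g z) atTop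
      (𝓝 (∫ z in D, f z * g z)) := by
  refine tendsto_integral_filter_of_dominated_convergence (fun _ => Cf * Cg) ?_ ?_
    (integrableOn_const hDfin) (hlim.mono fun z hz => hz.mul_const (g z))
  · filter_upwards [eventually_ne_atTop 0] with N hN
    exact (integrable_quasiInterpolant hΞ D (G N) (Nat.cast_ne_zero.2 hN)
      f).aestronglyMeasurable.restrict.mul hgm
  · filter_upwards [eventually_gt_atTop 0] with N hN
    refine (ae_restrict_iff' hD).2 (ae_of_all _ fun z hz => ?_)
    rw [norm_mul]
    exact mul_le_mul
      (norm_quasiInterpolant_le h0 hΞ hint hpart (Nat.cast_pos.2 hN) hD _ hCf0 hCf z)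
      (hCg z hz) (norm_nonneg _) hCf0

end

theorem riemann_sum_inner_product_convergence_general
    (d : ℕ) (D : Set (Fin d → ℝ)) (hDopen : IsOpen D) (hDbdd : Bornology.IsBounded D)
    (DN : ℕ → Set (Fin d → ℝ)) (hmono : Monotone DN)
    (hDNopen : ∀ N, ∃ U : Set (Fin d → ℝ), IsOpen U ∧ DN N = U ∩ closure D)
    (hcover : volume (closure D \ ⋃ N, DN N) = 0)
    (G : ℕ → Finset (Fin d → ℤ))
    (hG : ∀ N (p : Fin d → ℤ), p ∈ G N ↔ (fun i => (p i : ℝ) / (N : ℝ)) ∈ DN N)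
    (Ξ : (Fin d → ℝ) → ℝ)
    (h01 : ∀ z, Ξ z ∈ Set.Icc (0 : ℝ) 1)
    (hsupp : Function.support Ξ ⊆ Set.Icc (fun _ => (-1 : ℝ)) (fun _ => (1 : ℝ)))
    (hint : ∫ z : Fin d → ℝ, Ξ z = 1)
    (hpart : ∀ z : Fin d → ℝ, ∑' k : Fin d → ℤ, Ξ (fun i => z i - (k i : ℝ)) = 1)
    (f g : (Fin d → ℝ) → ℝ)
    (hf : ContinuousOn f (closure D)) (hg : ContinuousOn g (closure D)) :
    Tendsto (fun N : ℕ => (N : ℝ) ^ d * ∑ p ∈ G N,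
        (∫ z in D, Ξ (fun i => (N : ℝ) * z i - (p i : ℝ)) * f z) *
        (∫ z in D, Ξ (fun i => (N : ℝ) * z i - (p i : ℝ)) * g z))
      atTop (𝓝 (∫ z in D, f z * g z)) := by
  have h0 : ∀ z, 0 ≤ Ξ z := fun z => (h01 z).1
  have hΞ : Integrable Ξ := .of_integral_ne_zero (by rw [hint]; exact one_ne_zero)
  have hball : Function.support Ξ ⊆ closedBall 0 1 := by
    rwa [closedBall_zero_eq_Icc_pi zero_le_one]
  have hDm := hDopen.measurableSet
  obtain ⟨Cf, hCf0, hCf⟩ := exists_pos_norm_le_of_continuousOn_closure hDbdd hf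
  obtain ⟨Cg, -, hCg⟩ := exists_pos_norm_le_of_continuousOn_closure hDbdd hg
  have hgm : AEStronglyMeasurable g (volume.restrict D) :=
    (hg.mono subset_closure).aestronglyMeasurable hDm
  have hlim := ae_tendsto_quasiInterpolant h0 hΞ hint hball hpart hDopen hf hCf hmono hDNopen
    hcover hG
  refine (tendsto_setIntegral_quasiInterpolant_mul h0 hΞ hint hpart hDm
    hDbdd.measure_lt_top.ne hCf0.le hCf hgm hCg hlim).congr' ?_
  filter_upwards [eventually_ne_atTop 0] with N hN
  exact setIntegral_quasiInterpolant_mul f fun p _ =>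
    integrableOn_scaledBump_mul hΞ (Nat.cast_ne_zero.2 hN) p hDm hgm hCg

/-- Equation (4.1): for `f, g ∈ C(cl D)`,
`N^d ∑_{p∈G_N} ⟨Ξ(N·−p), f⟩_{L²(D)} ⟨Ξ(N·−p), g⟩_{L²(D)} → ⟨f,g⟩_{L²(D)}` as `N → ∞`. -/
theorem riemann_sum_inner_product_convergence
    (d : ℕ) (D : Set (Fin d → ℝ)) (hDopen : IsOpen D) (hDbdd : Bornology.IsBounded D)
    (DN : ℕ → Set (Fin d → ℝ)) (hmono : Monotone DN)
    (hDNopen : ∀ N, ∃ U : Set (Fin d → ℝ), IsOpen U ∧ DN N = U ∩ closure D)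
    (hcover : volume (closure D \ ⋃ N, DN N) = 0)
    (G : ℕ → Finset (Fin d → ℤ))
    (hG : ∀ N (p : Fin d → ℤ), p ∈ G N ↔ (fun i => (p i : ℝ) / (N : ℝ)) ∈ DN N)
    (Ξ : (Fin d → ℝ) → ℝ)
    (hmeas : Measurable Ξ) (h01 : ∀ z, Ξ z ∈ Set.Icc (0 : ℝ) 1)
    (hsupp : Function.support Ξ ⊆ Set.Icc (fun _ => (-1 : ℝ)) (fun _ => (1 : ℝ)))
    (hint : ∫ z : Fin d → ℝ, Ξ z = 1)
    (hpart : ∀ z : Fin d → ℝ, ∑' k : Fin d → ℤ, Ξ (fun i => z i - (k i : ℝ)) = 1)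
    (hsq : 1 / 2 < ∫ z : Fin d → ℝ, (Ξ z) ^ 2)
    (f g : (Fin d → ℝ) → ℝ)
    (hf : ContinuousOn f (closure D)) (hg : ContinuousOn g (closure D)) :
    Tendsto (fun N : ℕ => (N : ℝ) ^ d * ∑ p ∈ G N,
        (∫ z in D, Ξ (fun i => (N : ℝ) * z i - (p i : ℝ)) * f z) *
        (∫ z in D, Ξ (fun i => (N : ℝ) * z i - (p i : ℝ)) * g z))
      atTop (𝓝 (∫ z in D, f z * g z)) :=
  riemann_sum_inner_product_convergence_general d D hDopen hDbdd DN hmono hDNopen hcover G hG Ξ h01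
    hsupp hint hpart f g hf hg
end
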